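/- arXiv:2008.05504 — 4 statements merged into one kernel-verified Lean document; each statement's English description precedes it below -/
import Mathlib

section
/- Let G be a theta-free graph of maximum degree at most 3, let H be a hole in G, and let v be a vertex of G not on H. Then v has at most three neighbors on H, and if v has exactly two neighbors on H, then these two neighbors are adjacent. -/
/-! If `v` has exactly two neighbours `u`, `w` on the hole and they are not adjacent, the hole
splits at `u` and `w` into two chordless paths of length at least two, and together with the path
`u v w` they form a theta induced on the hole plus `v`. The bound of three neighbours is just the
degree bound. -/

def IsTheta {V : Type} (G : SimpleGraph V) : Prop :=
  ∃ (a b : V) (p1 p2 p3 : G.Walk a b),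
    a ≠ b ∧ p1.IsPath ∧ p2.IsPath ∧ p3.IsPath ∧
    2 ≤ p1.length ∧ 2 ≤ p2.length ∧ 2 ≤ p3.length ∧
    (∀ w, w ∈ p1.support → w ∈ p2.support → w = a ∨ w = b) ∧
    (∀ w, w ∈ p1.support → w ∈ p3.support → w = a ∨ w = b) ∧
    (∀ w, w ∈ p2.support → w ∈ p3.support → w = a ∨ w = b) ∧
    (∀ w, w ∈ p1.support ∨ w ∈ p2.support ∨ w ∈ p3.support) ∧
    (∀ u w, G.Adj u w ↔ s(u, w) ∈ p1.edges ∨ s(u, w) ∈ p2.edges ∨ s(u, w) ∈ p3.edges)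

def ThetaFree {V : Type} (G : SimpleGraph V) : Prop :=
  ¬ ∃ S : Set V, IsTheta (G.induce S)

def IsHoleCycle {V : Type} (G : SimpleGraph V) {v : V} (c : G.Walk v v) : Prop :=
  c.IsCycle ∧ 4 ≤ c.length ∧
    ∀ u w, u ∈ c.support → w ∈ c.support → G.Adj u w → s(u, w) ∈ c.edges

namespace SimpleGraph.Walk

variable {V : Type} {G : SimpleGraph V} {s : Set V} {u w : V}

lemma mem_support_induce (p : G.Walk u w) (hp : ∀ x ∈ p.support, x ∈ s) (x : s) :
    x ∈ (p.induce s hp).support ↔ (x : V) ∈ p.support := by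
  simp

lemma mem_edges_induce (p : G.Walk u w) (hp : ∀ x ∈ p.support, x ∈ s) (x y : s) :
    s(x, y) ∈ (p.induce s hp).edges ↔ s((x : V), (y : V)) ∈ p.edges := by
  have h : (p.induce s hp).edges.map (Sym2.map Subtype.val) = p.edges := by
    induction p <;> simp [*]
  rw [← h]
  exact (List.mem_map_of_injective (Sym2.map.injective Subtype.val_injective)).symm

@[simp] lemma length_induce (p : G.Walk u w) (hp : ∀ x ∈ p.support, x ∈ s) :
    (p.induce s hp).length = p.length := by
  induction p <;> simp [*]

@[simp] lemma isPath_induce_iff (p : G.Walk u w) (hp : ∀ x ∈ p.support, x ∈ s) :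
    (p.induce s hp).IsPath ↔ p.IsPath := by
  rw [isPath_def, isPath_def, support_induce, ← List.nodup_map_iff Subtype.val_injective]
  simp

lemma two_le_length_of_not_adj (p : G.Walk u w) (hne : u ≠ w) (hnadj : ¬ G.Adj u w) :
    2 ≤ p.length := by
  rcases p with _ | ⟨h, _ | ⟨_, _⟩⟩
  · exact absurd rfl hne
  · exact absurd h hnadj
  · simp

lemma IsCycle.eq_or_eq_of_mem_support_append {p : G.Walk u w} {q : G.Walk w u}
    (hc : (p.append q).IsCycle) {x : V} (hxp : x ∈ p.support) (hxq : x ∈ q.support) :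
    x = u ∨ x = w := by
  have hdisj : p.support.tail.Disjoint q.support.tail := by
    have := hc.support_nodup
    rw [tail_support_append] at this
    exact List.disjoint_of_nodup_append this
  rw [← cons_tail_support] at hxp hxq
  rcases List.mem_cons.1 hxp with rfl | hxp
  · exact .inl rfl
  rcases List.mem_cons.1 hxq with rfl | hxq
  · exact .inr rfl
  exact absurd hxq (hdisj hxp)

lemma IsCycle.exists_arcs {v₀ : V} {c : G.Walk v₀ v₀} (hc : c.IsCycle) (hu : u ∈ c.support)
    (hw : w ∈ c.support) :
    ∃ (p : G.Walk u w) (q : G.Walk w u), (p.append q).IsCycle ∧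
      (∀ x, x ∈ c.support ↔ x ∈ p.support ∨ x ∈ q.support) ∧
      (∀ e, e ∈ c.edges ↔ e ∈ p.edges ∨ e ∈ q.edges) := by
  classical
  obtain ⟨p, q, hpq⟩ : ∃ (p : G.Walk u w) (q : G.Walk w u), p.append q = c.rotate u hu :=
    ⟨_, _, take_spec _ ((mem_support_rotate_iff ..).2 hw)⟩
  refine ⟨p, q, hpq ▸ hc.rotate hu, fun x => ?_, fun e => ?_⟩
  · rw [← mem_support_rotate_iff c u hu, ← hpq, mem_support_append_iff]
  · rw [← (c.rotate_edges u hu).perm.mem_iff, ← hpq, edges_append, List.mem_append]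

end SimpleGraph.Walk

open SimpleGraph Walk

variable {V : Type} {G : SimpleGraph V}

theorem isTheta_induce_of_isPath {a b : V} (p₁ p₂ p₃ : G.Walk a b) (hab : a ≠ b)
    (hp₁ : p₁.IsPath) (hp₂ : p₂.IsPath) (hp₃ : p₃.IsPath)
    (hl₁ : 2 ≤ p₁.length) (hl₂ : 2 ≤ p₂.length) (hl₃ : 2 ≤ p₃.length)
    (h₁₂ : ∀ x ∈ p₁.support, x ∈ p₂.support → x = a ∨ x = b)
    (h₁₃ : ∀ x ∈ p₁.support, x ∈ p₃.support → x = a ∨ x = b)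
    (h₂₃ : ∀ x ∈ p₂.support, x ∈ p₃.support → x = a ∨ x = b)
    (hadj : ∀ x y, (x ∈ p₁.support ∨ x ∈ p₂.support ∨ x ∈ p₃.support) →
      (y ∈ p₁.support ∨ y ∈ p₂.support ∨ y ∈ p₃.support) → G.Adj x y →
      s(x, y) ∈ p₁.edges ∨ s(x, y) ∈ p₂.edges ∨ s(x, y) ∈ p₃.edges) :
    IsTheta (G.induce {x | x ∈ p₁.support ∨ x ∈ p₂.support ∨ x ∈ p₃.support}) := by
  set S := {x | x ∈ p₁.support ∨ x ∈ p₂.support ∨ x ∈ p₃.support}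
  have hS₁ : ∀ x ∈ p₁.support, x ∈ S := fun _ hx => .inl hx
  have hS₂ : ∀ x ∈ p₂.support, x ∈ S := fun _ hx => .inr (.inl hx)
  have hS₃ : ∀ x ∈ p₃.support, x ∈ S := fun _ hx => .inr (.inr hx)
  refine ⟨_, _, p₁.induce S hS₁, p₂.induce S hS₂, p₃.induce S hS₃, by simpa using hab,
    (isPath_induce_iff _ _).2 hp₁, (isPath_induce_iff _ _).2 hp₂, (isPath_induce_iff _ _).2 hp₃,
    by simpa using hl₁, by simpa using hl₂, by simpa using hl₃, ?_, ?_, ?_, ?_, ?_⟩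
  · intro x h₁ h₂
    rw [mem_support_induce] at h₁ h₂
    simpa [Subtype.ext_iff] using h₁₂ x h₁ h₂
  · intro x h₁ h₃
    rw [mem_support_induce] at h₁ h₃
    simpa [Subtype.ext_iff] using h₁₃ x h₁ h₃
  · intro x h₂ h₃
    rw [mem_support_induce] at h₂ h₃
    simpa [Subtype.ext_iff] using h₂₃ x h₂ h₃
  · intro x
    simp only [mem_support_induce]
    exact x.2
  · intro x y
    simp only [induce_adj, mem_edges_induce]
    refine ⟨hadj x y x.2 y.2, ?_⟩
    rintro (h | h | h) <;> exact adj_of_mem_edges _ h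

theorem ThetaFree.adj_of_neighbors_on_cycle (hth : ThetaFree G) {v₀ : V} {c : G.Walk v₀ v₀}
    (hc : c.IsCycle) (hchord : c.IsChordless) {v u w : V} (hv : v ∉ c.support)
    (hu : u ∈ c.support) (hw : w ∈ c.support) (hvu : G.Adj v u) (hvw : G.Adj v w) (huw : u ≠ w)
    (hnbr : ∀ x ∈ c.support, G.Adj v x → x = u ∨ x = w) : G.Adj u w := by
  by_contra hnadj
  obtain ⟨p, q, hcyc, hsupp, hedges⟩ := hc.exists_arcs hu hw
  have hmem : ∀ x, x ∈ p.support ∨ x ∈ q.support → x ∈ c.support := fun x => (hsupp x).2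
  let P : G.Walk u w := .cons hvu.symm (.cons hvw .nil)
  have hPsupp : ∀ x, x ∈ P.support ↔ x = u ∨ x = v ∨ x = w := by simp [P]
  have hvc : ∀ x, x ∈ P.support ∨ x ∈ p.support ∨ x ∈ q.reverse.support →
      x = v ∨ x ∈ c.support := by
    rintro x (hx | hx | hx)
    · rcases (hPsupp x).1 hx with rfl | rfl | rfl
      exacts [.inr hu, .inl rfl, .inr hw]
    · exact .inr (hmem x (.inl hx))
    · exact .inr (hmem x (.inr (by simpa using hx)))
  have hP : ∀ x ∈ P.support, x ∈ c.support → x = u ∨ x = w := by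
    intro x hxP hxc
    rcases (hPsupp x).1 hxP with rfl | rfl | rfl
    exacts [.inl rfl, absurd hxc hv, .inr rfl]
  refine hth ⟨_, isTheta_induce_of_isPath P p q.reverse huw ?_
    (hcyc.isPath_of_append_left (not_nil_of_ne huw.symm))
    (hcyc.isPath_of_append_right (not_nil_of_ne huw)).reverse le_rfl
    (two_le_length_of_not_adj p huw hnadj)
    (by simpa using two_le_length_of_not_adj q huw.symm (hnadj ∘ G.adj_symm))
    (fun x hxP hxp => hP x hxP (hmem x (.inl hxp)))
    (fun x hxP hxq => hP x hxP (hmem x (.inr (by simpa using hxq))))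
    (fun x hxp hxq => hcyc.eq_or_eq_of_mem_support_append hxp (by simpa using hxq)) ?_⟩
  · have hvu' : v ≠ u := fun h => hv (h ▸ hu)
    have hvw' : v ≠ w := fun h => hv (h ▸ hw)
    simp [P, isPath_def, huw, hvu'.symm, hvw']
  · intro x y hx hy hxy
    rcases hvc x hx with rfl | hxc <;> rcases hvc y hy with rfl | hyc
    · exact absurd hxy G.irrefl
    · rcases hnbr y hyc hxy with rfl | rfl <;> simp [P]
    · rcases hnbr x hxc hxy.symm with rfl | rfl <;> simp [P, Sym2.eq_swap]
    · simpa using .inr ((hedges _).1 (hchord.mem_edges hxc hyc hxy))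

theorem stmt_2 {V : Type} [Fintype V] [DecidableEq V] (G : SimpleGraph V)
    [DecidableRel G.Adj]
    (hth : ThetaFree G) (hdeg : ∀ v, G.degree v ≤ 3)
    {v0 : V} (c : G.Walk v0 v0) (hc : IsHoleCycle G c)
    (v : V) (hv : v ∉ c.support) :
    (c.support.toFinset.filter (fun u => G.Adj v u)).card ≤ 3 ∧
    ((c.support.toFinset.filter (fun u => G.Adj v u)).card = 2 →
      ∀ u w, u ∈ c.support → w ∈ c.support → G.Adj v u → G.Adj v w → u ≠ w →
        G.Adj u w) := by
  set N := c.support.toFinset.filter (fun u => G.Adj v u)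
  have hN : N ⊆ G.neighborFinset v := fun x hx =>
    (G.mem_neighborFinset v x).2 (Finset.mem_filter.1 hx).2
  refine ⟨(Finset.card_le_card hN).trans (hdeg v), ?_⟩
  intro hcard u w hu hw hvu hvw huw
  have hNuw : N = {u, w} := by
    refine (Finset.eq_of_subset_of_card_le ?_ (by rw [hcard, Finset.card_pair huw])).symm
    simp [Finset.insert_subset_iff, N, hu, hw, hvu, hvw]
  refine hth.adj_of_neighbors_on_cycle hc.1
    (isChordless_iff_forall_mem_edges.2 fun x y => hc.2.2 x y) hv hu hw hvu hvw huw ?_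
  intro x hx hvx
  simpa [hNuw] using (show x ∈ N by simp [N, hx, hvx])
end

section
/- Every ring of maximum degree at most 4 does not contain K_6 as a minor. -/
/-- `H` is a minor of `G` (branch-set formulation). -/
def MinorOf {α β : Type} (H : SimpleGraph α) (G : SimpleGraph β) : Prop :=
  ∃ B : α → Set β, (∀ u, (B u).Nonempty) ∧ (∀ u, (G.induce (B u)).Connected) ∧
    (∀ u u', u ≠ u' → Disjoint (B u) (B u')) ∧
    (∀ u u', H.Adj u u' → ∃ x ∈ B u, ∃ y ∈ B u', G.Adj x y)

/-- A ring: the vertex set is partitioned into `k ≥ 3` cliques `X i` (indices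
mod `k`) with the adjacency conditions of Boncompagni, Penev and Vušković. -/
def IsRing {V : Type} (G : SimpleGraph V) : Prop :=
  ∃ k : ℕ, 3 ≤ k ∧ ∃ X : ZMod k → Set V,
    (∀ v : V, ∃! i, v ∈ X i) ∧
    (∀ i, G.IsClique (X i)) ∧
    (∀ i, ∀ v ∈ X i, ∀ w : V, w ∉ X (i - 1) → w ∉ X i → w ∉ X (i + 1) → ¬ G.Adj v w) ∧
    (∀ i, ∃ x ∈ X i, (∀ w ∈ X (i - 1), G.Adj x w) ∧ (∀ w ∈ X (i + 1), G.Adj x w)) ∧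
    (∀ i, ∀ x ∈ X i, ∀ x' ∈ X i,
      (∀ w : V, (G.Adj x w ∨ w = x) → (G.Adj x' w ∨ w = x')) ∨
      (∀ w : V, (G.Adj x' w ∨ w = x') → (G.Adj x w ∨ w = x)))

/-!
A hub of `X i` is adjacent to all other vertices of `X (i - 1) ∪ X i ∪ X (i + 1)`, so with
maximum degree 4 any three consecutive parts have at most 5 vertices. Hence some part is a single
vertex `w`, and any two consecutive parts have at most 4 vertices. Removing `w` cuts the ring
into a path of parts, and the position `g` along this path changes by at most one across an edge.
At least five branch sets of a `K₆` model avoid `w`. If `m` is the largest of their minimal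
`g`-values, each of them is connected, contains a vertex with `g ≤ m` and (touching the set
realising `m`) one with `g ≥ m - 1`, so all five meet the two parts at levels `m - 1` and `m`,
which have at most 4 vertices.
-/

theorem Set.ncard_le_ncard_of_pairwiseDisjoint {α ι : Type} {s : Set ι} {B : ι → Set α}
    {Y : Set α} (hY : Y.Finite) (hdisj : s.PairwiseDisjoint B)
    (hmeet : ∀ i ∈ s, (B i ∩ Y).Nonempty) : s.ncard ≤ Y.ncard := by
  rcases s.eq_empty_or_nonempty with rfl | ⟨i, hi⟩
  · simp
  have : Nonempty α := ⟨(hmeet i hi).some⟩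
  choose! z hzB hzY using hmeet
  refine Set.ncard_le_ncard_of_injOn z hzY (fun i hi j hj hij => ?_) hY
  by_contra hne
  exact Set.disjoint_left.mp (hdisj hi hj hne) (hzB i hi) (hij ▸ hzB j hj)

def band {V : Type} (g : V → ℕ) (t : ℕ) : Set V := {v | g v = t ∨ g v = t + 1}

namespace SimpleGraph

variable {V : Type} {G : SimpleGraph V}

theorem ncard_le_degree_add_one [Fintype V] [DecidableRel G.Adj] {s : Set V} {x : V}
    (hs : s ⊆ insert x (G.neighborSet x)) : s.ncard ≤ G.degree x + 1 :=
  calc s.ncard ≤ (insert x (G.neighborSet x)).ncard := Set.ncard_le_ncard hs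
    _ ≤ (G.neighborSet x).ncard + 1 := Set.ncard_insert_le _ _
    _ = G.degree x + 1 := by
      rw [← Nat.card_coe_set_eq, Nat.card_eq_fintype_card, G.card_neighborSet_eq_degree]

theorem Walk.exists_mem_support_mem_band {g : V → ℕ}
    (hg : ∀ a b, G.Adj a b → g b ≤ g a + 1) {x y : V} (p : G.Walk x y) {t : ℕ}
    (hx : g x ≤ t + 1) (hy : t ≤ g y) : ∃ z ∈ p.support, z ∈ band g t := by
  induction p with
  | nil => exact ⟨_, List.mem_singleton_self _, show _ ∨ _ by omega⟩
  | @cons u v _ huv q ih =>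
    by_cases hu : u ∈ band g t
    · exact ⟨u, q.support.mem_cons_self, hu⟩
    · simp only [band, Set.mem_ofPred_eq] at hu
      obtain ⟨z, hz, hzt⟩ := ih (by have := hg u v huv; omega) hy
      exact ⟨z, List.mem_cons_of_mem u hz, hzt⟩

theorem exists_band_meeting {ι : Type} {B : ι → Set V} {s : Set ι} (g : V → ℕ)
    (hs : s.Finite) (hne : ∀ i ∈ s, (B i).Nonempty)
    (hconn : ∀ i ∈ s, (G.induce (B i)).Preconnected)
    (htouch : ∀ i ∈ s, ∀ j ∈ s, i ≠ j → ∃ x ∈ B i, ∃ y ∈ B j, G.Adj x y)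
    (hg : ∀ i ∈ s, ∀ j ∈ s, ∀ x ∈ B i, ∀ y ∈ B j, G.Adj x y → g y ≤ g x + 1) :
    ∃ t, ∀ i ∈ s, (B i ∩ band g t).Nonempty := by
  rcases s.eq_empty_or_nonempty with rfl | hs_ne
  · exact ⟨0, by simp⟩
  set μ : ι → ℕ := fun i => sInf (g '' B i)
  have hμ_mem : ∀ i ∈ s, ∃ a ∈ B i, g a = μ i := fun i hi => Nat.sInf_mem ((hne i hi).image g)
  have hμ_le : ∀ i, ∀ x ∈ B i, μ i ≤ g x := fun i x hx => Nat.sInf_le ⟨x, hx, rfl⟩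
  obtain ⟨i₀, hi₀, hmax⟩ := Set.exists_max_image s μ hs hs_ne
  refine ⟨μ i₀ - 1, fun i hi => ?_⟩
  obtain ⟨a, ha, hga⟩ := hμ_mem i hi
  obtain ⟨b, hb, hgb⟩ : ∃ b ∈ B i, μ i₀ - 1 ≤ g b := by
    by_cases hii₀ : i = i₀
    · subst hii₀
      exact ⟨a, ha, by omega⟩
    · obtain ⟨x, hx, y, hy, hxy⟩ := htouch i₀ hi₀ i hi (Ne.symm hii₀)
      have := hg i hi i₀ hi₀ y hy x hx hxy.symm
      have := hμ_le i₀ x hx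
      exact ⟨y, hy, by omega⟩
  obtain ⟨p⟩ := hconn i hi ⟨a, ha⟩ ⟨b, hb⟩
  obtain ⟨z, -, hz⟩ := p.exists_mem_support_mem_band (g := g ∘ Subtype.val)
    (fun x y hxy => hg i hi i hi x.1 x.2 y.1 y.2 hxy)
    (by have := hmax i hi; simp only [Function.comp_apply]; omega) hgb
  exact ⟨z, z.2, hz⟩

theorem not_minorOf_top_of_band [Finite V] {n : ℕ} (w : V) (g : V → ℕ)
    (hg : ∀ x y, G.Adj x y → x ≠ w → g y ≤ g x + 1)
    (hband : ∀ t, (band g t).ncard + 2 ≤ n) :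
    ¬ MinorOf (⊤ : SimpleGraph (Fin n)) G := by
  rintro ⟨B, hne, hconn, hdisj, hadj⟩
  set s := {u : Fin n | w ∉ B u}
  have hs : n ≤ s.ncard + 1 := by
    have hsc : sᶜ.ncard ≤ 1 := (Set.ncard_le_one (Set.toFinite _)).mpr fun a ha b hb => by
      by_contra hab
      exact Set.disjoint_left.mp (hdisj a b hab) (not_not.mp ha) (not_not.mp hb)
    have := Set.ncard_add_ncard_compl s
    simp only [Nat.card_eq_fintype_card, Fintype.card_fin] at this
    omega
  obtain ⟨t, ht⟩ := exists_band_meeting g s.toFinite (fun i _ => hne i)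
    (fun i _ => (hconn i).preconnected) (fun i _ j _ hij => hadj i j ((top_adj i j).mpr hij))
    (fun i hi _ _ x hx _ _ hxy => hg x _ hxy (by rintro rfl; exact hi hx))
  have := Set.ncard_le_ncard_of_pairwiseDisjoint (Set.toFinite (band g t))
    (fun i _ j _ hij => hdisj i j hij) ht
  have := hband t
  omega

end SimpleGraph

theorem ZMod.sub_one_ne_self_ne_add_one {k : ℕ} (hk : 3 ≤ k) (i : ZMod k) :
    i - 1 ≠ i ∧ i ≠ i + 1 ∧ i - 1 ≠ i + 1 := by
  have hne : ∀ a : ℕ, 0 < a → a < k → (a : ZMod k) ≠ 0 := fun a ha hak h => by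
    rw [ZMod.natCast_eq_zero_iff] at h
    exact absurd (Nat.le_of_dvd ha h) (by omega)
  refine ⟨fun h => hne 1 one_pos (by omega) ?_, fun h => hne 1 one_pos (by omega) ?_,
    fun h => hne 2 two_pos (by omega) ?_⟩ <;> push_cast <;> linear_combination -h

theorem ZMod.val_le_val_add_one {n : ℕ} [NeZero n] {a b : ZMod n} (ha : a ≠ 0)
    (hb : b = a - 1 ∨ b = a ∨ b = a + 1) : b.val ≤ a.val + 1 := by
  have hone : (1 : ZMod n).val ≤ 1 := by rw [ZMod.val_one_eq_one_mod]; exact Nat.mod_le 1 n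
  rcases hb with rfl | rfl | rfl
  · have := ZMod.val_pos.mpr ha
    rw [ZMod.val_sub (by omega)]
    omega
  · omega
  · exact (ZMod.val_add_le a 1).trans (by omega)

section Ring

variable {V : Type} {G : SimpleGraph V} {k : ℕ} {X : ZMod k → Set V}

theorem ncard_three_consecutive_le [Fintype V] [DecidableRel G.Adj] {d : ℕ} (hk : 3 ≤ k)
    (hpart : ∀ v, ∃! i, v ∈ X i) (i : ZMod k) (hclique : G.IsClique (X i))
    (hhub : ∃ x ∈ X i, (∀ w ∈ X (i - 1), G.Adj x w) ∧ ∀ w ∈ X (i + 1), G.Adj x w)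
    (hdeg : ∀ v, G.degree v ≤ d) :
    (X (i - 1)).ncard + (X i).ncard + (X (i + 1)).ncard ≤ d + 1 := by
  obtain ⟨x, hx, hprev, hnext⟩ := hhub
  obtain ⟨h01, h12, h02⟩ := ZMod.sub_one_ne_self_ne_add_one hk i
  have hdisj : ∀ {a b}, a ≠ b → Disjoint (X a) (X b) := fun hab =>
    Set.disjoint_left.mpr fun v ha hb => hab ((hpart v).unique ha hb)
  have hsub : X (i - 1) ∪ X i ∪ X (i + 1) ⊆ insert x (G.neighborSet x) := by
    rintro v ((hv | hv) | hv)
    · exact Or.inr (hprev v hv)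
    · rcases eq_or_ne v x with rfl | hvx
      · exact Or.inl rfl
      · exact Or.inr (hclique hx hv hvx.symm)
    · exact Or.inr (hnext v hv)
  calc _ = (X (i - 1) ∪ X i ∪ X (i + 1)).ncard := by
        rw [Set.ncard_union_eq (Set.disjoint_union_left.mpr ⟨hdisj h02, hdisj h12⟩),
          Set.ncard_union_eq (hdisj h01)]
    _ ≤ G.degree x + 1 := G.ncard_le_degree_add_one hsub
    _ ≤ d + 1 := Nat.add_le_add_right (hdeg x) 1

theorem exists_eq_singleton_of_ncard_le [Finite V] (hne : ∀ i, (X i).Nonempty) (i : ZMod k)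
    (h : (X (i - 1)).ncard + (X i).ncard + (X (i + 1)).ncard ≤ 5) : ∃ p w, X p = {w} := by
  suffices ∃ p, (X p).ncard = 1 from
    let ⟨p, hp⟩ := this
    ⟨p, Set.ncard_eq_one.mp hp⟩
  have hpos : ∀ j, 0 < (X j).ncard := fun j => (Set.ncard_pos (Set.toFinite _)).mpr (hne j)
  by_contra! hno
  have := hpos (i - 1); have := hpos i; have := hpos (i + 1)
  have := hno (i - 1); have := hno i; have := hno (i + 1)
  omega

theorem ncard_union_add_one_le [Finite V] {d : ℕ} (hne : ∀ i, (X i).Nonempty)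
    (h3 : ∀ i, (X (i - 1)).ncard + (X i).ncard + (X (i + 1)).ncard ≤ d + 1) (j : ZMod k) :
    (X j ∪ X (j + 1)).ncard ≤ d := by
  have h := h3 (j + 1)
  rw [add_sub_cancel_right] at h
  have := (Set.ncard_pos (Set.toFinite _)).mpr (hne (j + 1 + 1))
  have := Set.ncard_union_le (X j) (X (j + 1))
  omega

theorem exists_potential_of_eq_singleton [NeZero k] (hpart : ∀ v, ∃! i, v ∈ X i)
    (hanti : ∀ i, ∀ v ∈ X i, ∀ w : V, w ∉ X (i - 1) → w ∉ X i → w ∉ X (i + 1) → ¬ G.Adj v w)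
    {p : ZMod k} {w : V} (hw : X p = {w}) :
    ∃ g : V → ℕ, (∀ v, v ∈ X (p + g v)) ∧ ∀ x y, G.Adj x y → x ≠ w → g y ≤ g x + 1 := by
  choose f hf using fun v => (hpart v).exists
  have hf_eq : ∀ {v i}, v ∈ X i → f v = i := fun hv => (hpart _).unique (hf _) hv
  refine ⟨fun v => (f v - p).val, fun v => ?_, fun x y hxy hxw => ?_⟩
  · rw [ZMod.natCast_zmod_val, add_sub_cancel]
    exact hf v
  have hx : f x - p ≠ 0 := fun h => by
    have := hf x
    rw [sub_eq_zero.mp h, hw] at this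
    exact hxw this
  have hy : f y = f x - 1 ∨ f y = f x ∨ f y = f x + 1 := by
    by_contra! h
    exact hanti (f x) x (hf x) y (fun hy => h.1 (hf_eq hy)) (fun hy => h.2.1 (hf_eq hy))
      (fun hy => h.2.2 (hf_eq hy)) hxy
  refine ZMod.val_le_val_add_one hx ?_
  rcases hy with h | h | h <;> rw [h]
  · exact Or.inl (by ring)
  · exact Or.inr (Or.inl rfl)
  · exact Or.inr (Or.inr (by ring))

end Ring

theorem stmt_12 {V : Type} [Fintype V] (G : SimpleGraph V) [DecidableRel G.Adj]
    (hring : IsRing G) (hdeg : ∀ v, G.degree v ≤ 4) :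
    ¬ MinorOf (⊤ : SimpleGraph (Fin 6)) G := by
  intro hminor
  obtain ⟨k, hk, X, hpart, hclique, hanti, hhub, -⟩ := hring
  have : NeZero k := ⟨by omega⟩
  have hne : ∀ i, (X i).Nonempty := fun i =>
    let ⟨x, hx, _⟩ := hhub i
    ⟨x, hx⟩
  have h3 : ∀ i, (X (i - 1)).ncard + (X i).ncard + (X (i + 1)).ncard ≤ 4 + 1 := fun i =>
    ncard_three_consecutive_le hk hpart i (hclique i) (hhub i) hdeg
  obtain ⟨p, w, hw⟩ := exists_eq_singleton_of_ncard_le hne 0 (h3 0)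
  obtain ⟨g, hgX, hg⟩ := exists_potential_of_eq_singleton hpart hanti hw
  refine SimpleGraph.not_minorOf_top_of_band w g hg (fun t => ?_) hminor
  have hband : band g t ⊆ X (p + t) ∪ X (p + t + 1) := by
    rintro v (h | h) <;> have hv := hgX v <;> rw [h] at hv
    · exact Or.inl hv
    · exact Or.inr (by rwa [Nat.cast_add, Nat.cast_one, ← add_assoc] at hv)
  have := Set.ncard_le_ncard hband
  have := ncard_union_add_one_le hne h3 (p + t)
  omega
end

section
/- Let G be a (theta, prism)-free subcubic graph with no clique separator, no K_4, no cube, no proper wheel, no extended prism, no pyramid, and no hole. Then G contains no triangle or G is the triangle K_3 itself; more precisely, if G properly contains a triangle abc (i.e., G ≠ K_3), then G has a clique separator of size at most 2. -/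
def IsPrism {V : Type} (G : SimpleGraph V) : Prop :=
  ∃ (a a' b b' c c' : V) (p1 : G.Walk a a') (p2 : G.Walk b b') (p3 : G.Walk c c'),
    p1.IsPath ∧ p2.IsPath ∧ p3.IsPath ∧
    1 ≤ p1.length ∧ 1 ≤ p2.length ∧ 1 ≤ p3.length ∧
    (∀ w, w ∈ p1.support → w ∉ p2.support) ∧
    (∀ w, w ∈ p1.support → w ∉ p3.support) ∧
    (∀ w, w ∈ p2.support → w ∉ p3.support) ∧
    (∀ w, w ∈ p1.support ∨ w ∈ p2.support ∨ w ∈ p3.support) ∧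
    G.Adj a b ∧ G.Adj b c ∧ G.Adj a c ∧ G.Adj a' b' ∧ G.Adj b' c' ∧ G.Adj a' c' ∧
    (∀ u w, G.Adj u w ↔ s(u, w) ∈ p1.edges ∨ s(u, w) ∈ p2.edges ∨ s(u, w) ∈ p3.edges ∨
      s(u, w) = s(a, b) ∨ s(u, w) = s(b, c) ∨ s(u, w) = s(a, c) ∨
      s(u, w) = s(a', b') ∨ s(u, w) = s(b', c') ∨ s(u, w) = s(a', c'))

def PrismFree {V : Type} (G : SimpleGraph V) : Prop :=
  ¬ ∃ S : Set V, IsPrism (G.induce S)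

def IsPyramid {V : Type} (G : SimpleGraph V) : Prop :=
  ∃ (x a b c : V) (p1 : G.Walk x a) (p2 : G.Walk x b) (p3 : G.Walk x c),
    p1.IsPath ∧ p2.IsPath ∧ p3.IsPath ∧
    1 ≤ p1.length ∧ 1 ≤ p2.length ∧ 1 ≤ p3.length ∧
    ((2 ≤ p1.length ∧ 2 ≤ p2.length) ∨ (2 ≤ p1.length ∧ 2 ≤ p3.length) ∨
      (2 ≤ p2.length ∧ 2 ≤ p3.length)) ∧
    (∀ w, w ∈ p1.support → w ∈ p2.support → w = x) ∧
    (∀ w, w ∈ p1.support → w ∈ p3.support → w = x) ∧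
    (∀ w, w ∈ p2.support → w ∈ p3.support → w = x) ∧
    (∀ w, w ∈ p1.support ∨ w ∈ p2.support ∨ w ∈ p3.support) ∧
    G.Adj a b ∧ G.Adj b c ∧ G.Adj a c ∧
    (∀ u w, G.Adj u w ↔ s(u, w) ∈ p1.edges ∨ s(u, w) ∈ p2.edges ∨ s(u, w) ∈ p3.edges ∨
      s(u, w) = s(a, b) ∨ s(u, w) = s(b, c) ∨ s(u, w) = s(a, c))

def PyramidFree {V : Type} (G : SimpleGraph V) : Prop :=
  ¬ ∃ S : Set V, IsPyramid (G.induce S)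

/-- `S` is a clique whose removal disconnects `G`. -/
def HasCliqueSeparator {V : Type} (G : SimpleGraph V) : Prop :=
  ∃ S : Set V, G.IsClique S ∧ ∃ u v : ↥(Sᶜ), ¬ (G.induce Sᶜ).Reachable u v

/-- The cube (the 3-dimensional hypercube): two vertices are adjacent iff they
differ in exactly one coordinate. -/
def cubeGraph : SimpleGraph (Fin 2 × Fin 2 × Fin 2) where
  Adj u v := u ≠ v ∧ ((u.1 = v.1 ∧ u.2.1 = v.2.1) ∨ (u.1 = v.1 ∧ u.2.2 = v.2.2) ∨
    (u.2.1 = v.2.1 ∧ u.2.2 = v.2.2))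
  symm := by
    constructor
    rintro u v ⟨hne, h⟩
    refine ⟨hne.symm, ?_⟩
    rcases h with ⟨h1, h2⟩ | ⟨h1, h2⟩ | ⟨h1, h2⟩
    · exact Or.inl ⟨h1.symm, h2.symm⟩
    · exact Or.inr (Or.inl ⟨h1.symm, h2.symm⟩)
    · exact Or.inr (Or.inr ⟨h1.symm, h2.symm⟩)
  loopless := ⟨fun u h => h.1 rfl⟩

/-- An extended prism: a prism made of the three paths `a…a'`, `b…b'`, `c…c'`
with an additional edge `xy`, where `x` is internal on the first path and `y`
internal on the second. -/
def IsExtPrism {V : Type} (G : SimpleGraph V) : Prop :=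
  ∃ (a a' b b' c c' x y : V) (p1 : G.Walk a a') (p2 : G.Walk b b') (p3 : G.Walk c c'),
    p1.IsPath ∧ p2.IsPath ∧ p3.IsPath ∧
    x ∈ p1.support ∧ x ≠ a ∧ x ≠ a' ∧ y ∈ p2.support ∧ y ≠ b ∧ y ≠ b' ∧
    1 ≤ p3.length ∧
    (∀ w, w ∈ p1.support → w ∉ p2.support) ∧
    (∀ w, w ∈ p1.support → w ∉ p3.support) ∧
    (∀ w, w ∈ p2.support → w ∉ p3.support) ∧
    (∀ w, w ∈ p1.support ∨ w ∈ p2.support ∨ w ∈ p3.support) ∧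
    G.Adj a b ∧ G.Adj b c ∧ G.Adj a c ∧ G.Adj a' b' ∧ G.Adj b' c' ∧ G.Adj a' c' ∧
    G.Adj x y ∧
    (∀ u w, G.Adj u w ↔ s(u, w) ∈ p1.edges ∨ s(u, w) ∈ p2.edges ∨ s(u, w) ∈ p3.edges ∨
      s(u, w) = s(a, b) ∨ s(u, w) = s(b, c) ∨ s(u, w) = s(a, c) ∨
      s(u, w) = s(a', b') ∨ s(u, w) = s(b', c') ∨ s(u, w) = s(a', c') ∨
      s(u, w) = s(x, y))

/-- `G` contains a proper wheel: a hole `c` together with a vertex `x` having at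
least three neighbours on `c`, such that the wheel is not a pyramid. -/
def HasProperWheel {V : Type} (G : SimpleGraph V) : Prop :=
  ∃ (v0 : V) (c : G.Walk v0 v0), IsHoleCycle G c ∧
    ∃ x : V, x ∉ c.support ∧
      (∃ n1 n2 n3 : V, n1 ≠ n2 ∧ n1 ≠ n3 ∧ n2 ≠ n3 ∧
        n1 ∈ c.support ∧ n2 ∈ c.support ∧ n3 ∈ c.support ∧
        G.Adj x n1 ∧ G.Adj x n2 ∧ G.Adj x n3) ∧
      ¬ IsPyramid (G.induce (insert x {w | w ∈ c.support}))

/-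
In a subcubic graph every vertex of a triangle `T = abc` has at most one neighbour outside `T`.
Suppose some vertex `v` lies outside `T`. Each vertex `t` of `T` has a neighbour in the component
of `v` in `G - T`, for otherwise the edge `T \ {t}` would be a clique separator. If the three
outer neighbours coincide, they form a `K₄` with `T`. Otherwise two vertices of `T`, say `a` and
`b`, have distinct outer neighbours `a'` and `b'`, and a shortest `a'`–`b'` path in that component
is chordless, so together with `a` and `b` it closes up to a hole. Hence `G` is the triangle.
-/

namespace SimpleGraph

variable {V : Type*} {G : SimpleGraph V} {u v : V}

theorem Walk.isChordless_of_length_eq_dist (p : G.Walk u v) (hp : p.length = G.dist u v) :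
    p.IsChordless := by
  rw [Walk.isChordless_iff_forall_mem_edges]
  suffices h : ∀ i j, i < j → j ≤ p.length → G.Adj (p.getVert i) (p.getVert j) →
      s(p.getVert i, p.getVert j) ∈ p.edges by
    intro x y hx hy hxy
    obtain ⟨i, rfl, hi⟩ := Walk.mem_support_iff_exists_getVert.mp hx
    obtain ⟨j, rfl, hj⟩ := Walk.mem_support_iff_exists_getVert.mp hy
    rcases lt_trichotomy i j with hij | rfl | hji
    · exact h i j hij hj hxy
    · exact absurd rfl hxy.ne
    · rw [Sym2.eq_swap]
      exact h j i hji hi hxy.symm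
  intro i j hij hj hadj
  -- the chord shortcuts `p` to a walk of length `i + 1 + (p.length - j)`
  have hshort := hp ▸ G.dist_le ((p.take i).append (.cons hadj (p.drop j)))
  simp only [Walk.length_append, Walk.take_length, Walk.length_cons, Walk.drop_length] at hshort
  obtain rfl : j = i + 1 := by omega
  exact (Walk.mk_mem_edges_iff_exists p).mpr ⟨i, by omega, rfl⟩

theorem Reachable.exists_isPath_isChordless (h : G.Reachable u v) :
    ∃ p : G.Walk u v, p.IsPath ∧ p.IsChordless := by
  obtain ⟨p, hp⟩ := h.exists_walk_length_eq_dist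
  exact ⟨p, p.isPath_of_length_eq_dist hp, p.isChordless_of_length_eq_dist hp⟩

theorem Walk.IsChordless.map {W : Type*} {G' : SimpleGraph W} (f : G ↪g G') {p : G.Walk u v}
    (hp : p.IsChordless) : (p.map f.toHom).IsChordless := by
  rw [Walk.isChordless_iff_forall_mem_edges, Walk.support_map, Walk.edges_map]
  intro x y hx hy hxy
  obtain ⟨x', hx', rfl⟩ := List.mem_map.mp hx
  obtain ⟨y', hy', rfl⟩ := List.mem_map.mp hy
  exact List.mem_map.mpr ⟨s(x', y'), hp.mem_edges hx' hy' (f.map_adj_iff.mp hxy), rfl⟩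

end SimpleGraph

open SimpleGraph

theorem exists_isHoleCycle_of_isChordless {V : Type} {G : SimpleGraph V} {x y α β : V}
    {P : G.Walk x y} (hP : P.IsPath) (hPc : P.IsChordless) (hxy : x ≠ y) (hαβ : G.Adj α β)
    (hαP : α ∉ P.support) (hβP : β ∉ P.support)
    (hα : ∀ w ∈ P.support, G.Adj α w ↔ w = x) (hβ : ∀ w ∈ P.support, G.Adj β w ↔ w = y) :
    ∃ (v₀ : V) (c : G.Walk v₀ v₀), IsHoleCycle G c := by
  have hαx : G.Adj α x := (hα x P.start_mem_support).mpr rfl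
  have hβy : G.Adj β y := (hβ y P.end_mem_support).mpr rfl
  have hPlen : P.length ≠ 0 := fun h => hxy (Walk.eq_of_length_eq_zero h)
  set Q := (P.concat hβy.symm).concat hαβ.symm
  have hQ : Q.IsPath :=
    (hP.concat hβP hβy.symm).concat (by simp [Walk.support_concat, hαP, hαβ.ne]) _
  refine ⟨α, .cons hαx Q, (Walk.cons_isCycle_iff _ _).mpr ⟨hQ, ?_⟩, ?_, ?_⟩
  · have hxβ : x ≠ β := ne_of_mem_of_not_mem P.start_mem_support hβP
    have hαe : s(α, x) ∉ P.edges := fun h => hαP (P.fst_mem_support_of_mem_edges h)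
    simp [Q, Walk.edges_concat, hαβ.ne, hαe, hxβ]
  · simp only [Q, Walk.length_cons, Walk.length_concat]
    omega
  · intro u w hu hw huw
    simp only [Q, Walk.support_cons, Walk.support_concat, Walk.edges_cons, Walk.edges_concat,
      List.concat_eq_append, List.mem_cons, List.mem_append, List.not_mem_nil, or_false]
      at hu hw ⊢
    have := huw.symm
    grind [hPc.mem_edges, Adj.ne]

theorem exists_isHoleCycle_of_reachable_induce {V : Type} {G : SimpleGraph V} {S : Set V}
    {α β : V} (hαβ : G.Adj α β) (hαS : α ∉ S) (hβS : β ∉ S) {x y : S} (hxy : x ≠ y)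
    (hr : (G.induce S).Reachable x y) (hα : ∀ w : S, G.Adj α w ↔ w = x)
    (hβ : ∀ w : S, G.Adj β w ↔ w = y) :
    ∃ (v₀ : V) (c : G.Walk v₀ v₀), IsHoleCycle G c := by
  obtain ⟨p, hp, hpc⟩ := hr.exists_isPath_isChordless
  have hS : ∀ w ∈ (p.map (Embedding.induce S).toHom).support, w ∈ S := by
    intro w hw
    obtain ⟨w', -, rfl⟩ := List.mem_map.mp ((Walk.support_map _ _).symm ▸ hw)
    exact w'.2
  exact exists_isHoleCycle_of_isChordless (hp.map Subtype.val_injective)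
    (hpc.map (Embedding.induce S)) (Subtype.coe_injective.ne hxy) hαβ
    (fun h => hαS (hS α h)) (fun h => hβS (hS β h))
    (fun w hw => (hα ⟨w, hS w hw⟩).trans Subtype.ext_iff)
    (fun w hw => (hβ ⟨w, hS w hw⟩).trans Subtype.ext_iff)

theorem card_add_one_le_degree_of_isClique {V : Type*} {G : SimpleGraph V} {t x y : V}
    [Fintype (G.neighborSet t)] {T : Finset V} (hT : G.IsClique (T : Set V)) (ht : t ∈ T)
    (hx : x ∉ T) (hy : y ∉ T) (hxy : x ≠ y) (htx : G.Adj t x) (hty : G.Adj t y) :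
    T.card + 1 ≤ G.degree t := by
  classical
  have hsub : insert x (insert y (T.erase t)) ⊆ G.neighborFinset t := by
    intro z hz
    simp only [Finset.mem_insert, Finset.mem_erase] at hz
    rw [mem_neighborFinset]
    rcases hz with rfl | rfl | ⟨hzt, hz⟩
    · exact htx
    · exact hty
    · exact hT ht hz hzt.symm
  have := Finset.card_le_card hsub
  rw [Finset.card_insert_of_notMem (by simp [hxy, hx]),
    Finset.card_insert_of_notMem (by simp [hy]), Finset.card_erase_of_mem ht,
    card_neighborFinset_eq_degree] at this
  have := Finset.card_pos.mpr ⟨t, ht⟩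
  omega

theorem exists_adj_reachable_of_not_hasCliqueSeparator {V : Type} {G : SimpleGraph V}
    (hsep : ¬ HasCliqueSeparator G) {T : Set V} (hT : G.IsClique T) {t : V} (ht : t ∈ T)
    (v : ↥Tᶜ) : ∃ w : ↥Tᶜ, (G.induce Tᶜ).Reachable v w ∧ G.Adj t w := by
  by_contra! hno
  -- otherwise `T \ {t}` separates `v` from `t`
  refine hsep ⟨T \ {t}, hT.subset Set.sdiff_subset,
    ⟨v, fun h => v.2 h.1⟩, ⟨t, fun h => h.2 rfl⟩, ?_⟩
  rintro ⟨p⟩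
  obtain ⟨d, -, hd, hd'⟩ := p.exists_boundary_dart
    {z | ∃ hz : (z : V) ∈ Tᶜ, (G.induce Tᶜ).Reachable v ⟨z, hz⟩} ⟨v.2, .rfl⟩ (fun h => h.1 ht)
  obtain ⟨hz, hvz⟩ := hd
  by_cases hs : (d.snd : V) ∈ T
  · have hdt : (d.snd : V) = t := by_contra fun h => d.snd.2 ⟨hs, h⟩
    have htd : G.Adj d.snd d.fst := d.adj.symm
    rw [hdt] at htd
    exact hno _ hvz htd
  · exact hd' ⟨hs, hvz.trans (Adj.reachable (G := G.induce Tᶜ) d.adj)⟩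

theorem exists_injective_pairwise_adj_fin_four {V : Type*} {G : SimpleGraph V} {a b c d : V}
    (hab : G.Adj a b) (hac : G.Adj a c) (had : G.Adj a d) (hbc : G.Adj b c) (hbd : G.Adj b d)
    (hcd : G.Adj c d) :
    ∃ f : Fin 4 → V, Function.Injective f ∧ ∀ i j, i ≠ j → G.Adj (f i) (f j) := by
  have hadj : ∀ i j, i ≠ j → G.Adj (![a, b, c, d] i) (![a, b, c, d] j) := by
    intro i j hij
    fin_cases i <;> fin_cases j <;> simp_all [G.adj_comm]
  exact ⟨_, fun i j h => by_contra fun hij => (hadj i j hij).ne h, hadj⟩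

theorem eq_or_eq_or_eq_of_triangle {V : Type} {G : SimpleGraph V} [G.LocallyFinite]
    (hdeg : ∀ v, G.degree v ≤ 3) (hsep : ¬ HasCliqueSeparator G)
    (hK4 : ¬ ∃ f : Fin 4 → V, Function.Injective f ∧ ∀ i j, i ≠ j → G.Adj (f i) (f j))
    (hhole : ¬ ∃ (v₀ : V) (c : G.Walk v₀ v₀), IsHoleCycle G c)
    {a b c : V} (hab : G.Adj a b) (hbc : G.Adj b c) (hac : G.Adj a c) (v : V) :
    v = a ∨ v = b ∨ v = c := by
  classical
  by_contra! hv
  set T : Finset V := {a, b, c}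
  have hT3 : G.IsNClique 3 T := is3Clique_triple_iff.mpr ⟨hab, hac, hbc⟩
  have hvT : v ∈ (T : Set V)ᶜ := by simpa [T] using hv
  have outer : ∀ t ∈ T, ∃ w : ↥(T : Set V)ᶜ, (G.induce (T : Set V)ᶜ).Reachable ⟨v, hvT⟩ w ∧
      ∀ w' : ↥(T : Set V)ᶜ, G.Adj t w' ↔ w' = w := by
    intro t ht
    obtain ⟨w, hvw, htw⟩ :=
      exists_adj_reachable_of_not_hasCliqueSeparator hsep hT3.isClique ht ⟨v, hvT⟩
    refine ⟨w, hvw, fun w' => ⟨fun htw' => by_contra fun hne => ?_, fun h => h ▸ htw⟩⟩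
    have := card_add_one_le_degree_of_isClique hT3.isClique ht w'.2 w.2
      (Subtype.coe_injective.ne hne) htw' htw
    have := hdeg t
    have := hT3.card_eq
    omega
  obtain ⟨a', ha', ha⟩ := outer a (by simp [T])
  obtain ⟨b', hb', hb⟩ := outer b (by simp [T])
  obtain ⟨c', hc', hc⟩ := outer c (by simp [T])
  by_cases hab' : a' = b'
  · by_cases hbc' : b' = c'
    · subst hab' hbc'
      exact hK4 (exists_injective_pairwise_adj_fin_four hab hac ((ha a').mpr rfl) hbc
        ((hb a').mpr rfl) ((hc a').mpr rfl))
    · exact hhole (exists_isHoleCycle_of_reachable_induce hbc (by simp [T]) (by simp [T]) hbc'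
        (hb'.symm.trans hc') hb hc)
  · exact hhole (exists_isHoleCycle_of_reachable_induce hab (by simp [T]) (by simp [T]) hab'
      (ha'.symm.trans hb') ha hb)

theorem card_eq_three_and_eq_top_of_triangle {V : Type} [Fintype V] {G : SimpleGraph V}
    {a b c : V} (hab : G.Adj a b) (hbc : G.Adj b c) (hac : G.Adj a c)
    (hcover : ∀ v, v = a ∨ v = b ∨ v = c) : Fintype.card V = 3 ∧ G = ⊤ := by
  classical
  refine ⟨?_, ?_⟩
  · have huniv : (Finset.univ : Finset V) = {a, b, c} := by
      ext z
      simpa using hcover z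
    rw [← Finset.card_univ, huniv, (is3Clique_triple_iff.mpr ⟨hab, hac, hbc⟩).card_eq]
  · ext x y
    rw [top_adj]
    refine ⟨Adj.ne, fun hxy => ?_⟩
    rcases hcover x with rfl | rfl | rfl <;> rcases hcover y with rfl | rfl | rfl <;>
      simp_all [G.adj_comm]

theorem stmt_17_general {V : Type} [Fintype V] (G : SimpleGraph V)
    [DecidableRel G.Adj]
    (hdeg : ∀ v, G.degree v ≤ 3)
    (hsep : ¬ HasCliqueSeparator G)
    (hK4 : ¬ ∃ f : Fin 4 → V, Function.Injective f ∧ ∀ i j, i ≠ j → G.Adj (f i) (f j))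
    (hhole : ¬ ∃ (v0 : V) (c : G.Walk v0 v0), IsHoleCycle G c) :
    ((¬ ∃ a b c : V, G.Adj a b ∧ G.Adj b c ∧ G.Adj a c) ∨
      (Fintype.card V = 3 ∧ G = ⊤)) ∧
    ((∃ a b c : V, G.Adj a b ∧ G.Adj b c ∧ G.Adj a c) →
      ¬ (Fintype.card V = 3 ∧ G = ⊤) →
      ∃ s : Finset V, s.card ≤ 2 ∧ G.IsClique (s : Set V) ∧
        ∃ u v : ↥((s : Set V)ᶜ), ¬ (G.induce ((s : Set V)ᶜ)).Reachable u v) := by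
  by_cases htri : ∃ a b c : V, G.Adj a b ∧ G.Adj b c ∧ G.Adj a c
  · obtain ⟨a, b, c, hab, hbc, hac⟩ := htri
    have hK3 := card_eq_three_and_eq_top_of_triangle hab hbc hac
      (eq_or_eq_or_eq_of_triangle hdeg hsep hK4 hhole hab hbc hac)
    exact ⟨Or.inr hK3, fun _ h => absurd hK3 h⟩
  · exact ⟨Or.inl htri, fun h => absurd h htri⟩

theorem stmt_17 {V : Type} [Fintype V] [DecidableEq V] (G : SimpleGraph V)
    [DecidableRel G.Adj]
    (hth : ThetaFree G) (hpr : PrismFree G) (hdeg : ∀ v, G.degree v ≤ 3)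
    (hsep : ¬ HasCliqueSeparator G)
    (hK4 : ¬ ∃ f : Fin 4 → V, Function.Injective f ∧ ∀ i j, i ≠ j → G.Adj (f i) (f j))
    (hcube : ¬ ∃ S : Set V, Nonempty (G.induce S ≃g cubeGraph))
    (hwheel : ¬ HasProperWheel G)
    (hext : ¬ ∃ S : Set V, IsExtPrism (G.induce S))
    (hpyr : PyramidFree G)
    (hhole : ¬ ∃ (v0 : V) (c : G.Walk v0 v0), IsHoleCycle G c) :
    ((¬ ∃ a b c : V, G.Adj a b ∧ G.Adj b c ∧ G.Adj a c) ∨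
      (Fintype.card V = 3 ∧ G = ⊤)) ∧
    ((∃ a b c : V, G.Adj a b ∧ G.Adj b c ∧ G.Adj a c) →
      ¬ (Fintype.card V = 3 ∧ G = ⊤) →
      ∃ s : Finset V, s.card ≤ 2 ∧ G.IsClique (s : Set V) ∧
        ∃ u v : ↥((s : Set V)ᶜ), ¬ (G.induce ((s : Set V)ᶜ)).Reachable u v) :=
  stmt_17_general G hdeg hsep hK4 hhole
end

section
/- Performing a net-graph replacement at every degree-3 vertex of a wall W yields the line graph of a chordless wall; consequently, the resulting graph has maximum degree 3. -/
def wallVerts (n m : ℕ) : Set (ℕ × ℕ) :=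
  {p | (p.1 = 1 ∧ ∃ j, 1 ≤ j ∧ j ≤ m ∧ p.2 = 2 * j - 1) ∨
    (1 < p.1 ∧ p.1 < n ∧ 1 ≤ p.2 ∧ p.2 ≤ 2 * m) ∨
    (p.1 = n ∧ Even n ∧ ∃ j, 1 ≤ j ∧ j ≤ m ∧ p.2 = 2 * j - 1) ∨
    (p.1 = n ∧ Odd n ∧ ∃ j, 1 ≤ j ∧ j ≤ m ∧ p.2 = 2 * j)}

def wallEdge (n m : ℕ) (p q : ℕ × ℕ) : Prop :=
  (p.1 = 1 ∧ q.1 = 1 ∧ ∃ j, 1 ≤ j ∧ j + 1 ≤ m ∧ p.2 = 2 * j - 1 ∧ q.2 = 2 * j + 1) ∨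
  (2 ≤ p.1 ∧ p.1 < n ∧ q.1 = p.1 ∧ 1 ≤ p.2 ∧ p.2 < 2 * m ∧ q.2 = p.2 + 1) ∨
  (p.1 = n ∧ q.1 = n ∧ Odd n ∧ ∃ j, 1 ≤ j ∧ j < m ∧ p.2 = 2 * j ∧ q.2 = 2 * j + 2) ∨
  (p.1 = n ∧ q.1 = n ∧ Even n ∧ ∃ j, 1 ≤ j ∧ j < m ∧ p.2 = 2 * j - 1 ∧ q.2 = 2 * j + 1) ∨
  (q.1 = p.1 + 1 ∧ q.2 = p.2 ∧ 1 ≤ p.1 ∧ p.1 < n ∧ 1 ≤ p.2 ∧ p.2 ≤ 2 * m ∧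
    Odd p.1 ∧ Odd p.2) ∨
  (q.1 = p.1 + 1 ∧ q.2 = p.2 ∧ 1 ≤ p.1 ∧ p.1 < n ∧ 1 ≤ p.2 ∧ p.2 ≤ 2 * m ∧
    Even p.1 ∧ Even p.2)

abbrev WallV (n m : ℕ) : Type := {p : ℕ × ℕ // p ∈ wallVerts n m}

def elemWall (n m : ℕ) : SimpleGraph (WallV n m) where
  Adj u v := u ≠ v ∧ (wallEdge n m u.1 v.1 ∨ wallEdge n m v.1 u.1)
  symm := ⟨fun u v h => ⟨h.1.symm, h.2.symm⟩⟩
  loopless := ⟨fun u h => h.1 rfl⟩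

def IsSubdivisionWith {α β : Type} (H : SimpleGraph α) (G : SimpleGraph β)
    (f : α → β) (P : ∀ u v : α, H.Adj u v → G.Walk (f u) (f v)) : Prop :=
  Function.Injective f ∧
  (∀ u v h, (P u v h).IsPath) ∧
  (∀ u v h, P u v h = (P v u h.symm).reverse) ∧
  (∀ u v h u' v' h', s(u, v) ≠ s(u', v') →
    ∀ w, w ∈ (P u v h).support → w ∈ (P u' v' h').support →
      (w = f u ∨ w = f v) ∧ (w = f u' ∨ w = f v')) ∧
  (∀ u v h w, w ∈ (P u v h).support → w ≠ f u → w ≠ f v → ∀ z, f z ≠ w) ∧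
  (∀ w : β, ∃ u v h, w ∈ (P u v h).support) ∧
  (∀ w x : β, G.Adj w x ↔ ∃ u v h, s(w, x) ∈ (P u v h).edges)

def IsSubdivision {α β : Type} (H : SimpleGraph α) (G : SimpleGraph β) : Prop :=
  ∃ f P, IsSubdivisionWith H G f P

def IsWallGraph (n m : ℕ) {β : Type} (G : SimpleGraph β) : Prop :=
  IsSubdivision (elemWall n m) G

def Chordless {V : Type} (G : SimpleGraph V) : Prop :=
  ∀ (v : V) (c : G.Walk v v), c.IsCycle → 4 ≤ c.length →
    ∀ u w, u ∈ c.support → w ∈ c.support → G.Adj u w → s(u, w) ∈ c.edges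

def LineGraph {V : Type} (G : SimpleGraph V) : SimpleGraph G.edgeSet where
  Adj e e' := e ≠ e' ∧ ∃ v : V, v ∈ (e : Sym2 V) ∧ v ∈ (e' : Sym2 V)
  symm := by
    constructor
    rintro e e' ⟨hne, v, hv, hv'⟩
    exact ⟨hne.symm, v, hv', hv⟩
  loopless := ⟨fun e h => h.1 rfl⟩

/-- `v` has at least three pairwise distinct neighbours, i.e. (in a subcubic
graph such as a wall) `v` has degree exactly 3. -/
def HasThreeNbrs {V : Type} (W : SimpleGraph V) (v : V) : Prop :=
  ∃ a b c : V, a ≠ b ∧ a ≠ c ∧ b ≠ c ∧ W.Adj v a ∧ W.Adj v b ∧ W.Adj v c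

/-- Vertices of the graph obtained from `W` by a net-graph replacement at every
degree-3 vertex: degree-≤2 vertices of `W` are kept, and every degree-3 vertex
`v` is replaced by the three triangle vertices `(v, e)`, one for each edge `e`
of `W` incident to `v`. -/
def RepVertP {V : Type} (W : SimpleGraph V) : V ⊕ V × Sym2 V → Prop
  | Sum.inl v => ¬ HasThreeNbrs W v
  | Sum.inr (v, e) => HasThreeNbrs W v ∧ e ∈ W.edgeSet ∧ v ∈ e

def repAdjAux {V : Type} (W : SimpleGraph V) :
    V ⊕ V × Sym2 V → V ⊕ V × Sym2 V → Prop
  | Sum.inl v, Sum.inl w => W.Adj v w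
  | Sum.inl v, Sum.inr (w, e) => e = s(v, w)
  | Sum.inr (v, e), Sum.inl w => e = s(v, w)
  | Sum.inr (v, e), Sum.inr (w, e') => v = w ∨ (e = e' ∧ e = s(v, w))

/-- The graph obtained from `W` by performing a net-graph replacement at every
degree-3 vertex of `W`. -/
def RepGraph {V : Type} (W : SimpleGraph V) :
    SimpleGraph {x : V ⊕ V × Sym2 V // RepVertP W x} where
  Adj x y := x ≠ y ∧ (repAdjAux W x.1 y.1 ∨ repAdjAux W y.1 x.1)
  symm := ⟨fun x y h => ⟨h.1.symm, h.2.symm⟩⟩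
  loopless := ⟨fun x h => h.1 rfl⟩

/-!
A vertex of degree three in `W` claims its three edges, and every other vertex `v` claims one
edge `c v` at it, chosen so that each edge is claimed by at least one of its ends: by Hall's
theorem this is possible for the edges joining two vertices of degree at most two, as every
vertex lies on at most two of them. Subdividing the edges claimed from both ends yields `W'`,
again a subdivision of the elementary wall. Claims correspond bijectively to the vertices of the
replaced graph (the triangle vertex `(v, e)` is the claim of `e` by `v`, a kept vertex `v` is
its claim of `c v`) and to the edges of `W'` (the half at `v` of a subdivided edge, or an
unsubdivided edge as a whole), and two claims are adjacent in the one graph exactly when their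
edges of `W'` meet. Every edge of `W'` has an end of degree at most two, so `W'` is chordless,
and a vertex of the replaced graph has at most as many neighbours as its base vertex in `W`,
hence at most three.
-/

open SimpleGraph Sum

theorem Set.exists_subset_triple_of_encard_le_three {α : Type} {s : Set α} (hs : s.encard ≤ 3)
    (x : α) : ∃ a b c, s ⊆ {a, b, c} := by
  have hfin : s.Finite := Set.finite_of_encard_le_coe hs
  rw [← hfin.cast_ncard_eq] at hs
  norm_cast at hs
  interval_cases h : s.ncard
  · exact ⟨x, x, x, by simp [(Set.ncard_eq_zero hfin).mp h]⟩
  · obtain ⟨a, rfl⟩ := Set.ncard_eq_one.mp h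
    exact ⟨a, a, a, by simp⟩
  · obtain ⟨a, b, -, rfl⟩ := Set.ncard_eq_two.mp h
    exact ⟨a, b, b, by simp⟩
  · obtain ⟨a, b, c, -, -, -, rfl⟩ := Set.ncard_eq_three.mp h
    exact ⟨a, b, c, subset_rfl⟩

section Degree

variable {V : Type} {G : SimpleGraph V}

theorem encard_neighborSet_le_two_of_not_hasThreeNbrs {v : V} (h : ¬ HasThreeNbrs G v) :
    (G.neighborSet v).encard ≤ 2 := by
  by_contra! h3
  obtain ⟨t, ht, ht3⟩ := Set.exists_subset_encard_eq (Order.add_one_le_of_lt h3)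
  obtain ⟨a, b, c, hab, hac, hbc, rfl⟩ := Set.encard_eq_three.mp ht3
  exact h ⟨a, b, c, hab, hac, hbc, ht (by simp), ht (by simp), ht (by simp)⟩

theorem eq_or_eq_of_not_hasThreeNbrs {v x y z : V} (h : ¬ HasThreeNbrs G v) (hx : G.Adj v x)
    (hy : G.Adj v y) (hz : G.Adj v z) (hxy : x ≠ y) : z = x ∨ z = y := by
  by_contra! hz'
  exact h ⟨x, y, z, hxy, hz'.1.symm, hz'.2.symm, hx, hy, hz⟩

theorem SimpleGraph.Walk.IsCycle.mem_edges_of_encard_neighborSet_le_two {u w : V}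
    {c : G.Walk u u} (hc : c.IsCycle) {v : V} (hv : v ∈ c.support)
    (h2 : (G.neighborSet v).encard ≤ 2) (hw : G.Adj v w) : s(v, w) ∈ c.edges := by
  have hsub : c.toSubgraph.neighborSet v ⊆ G.neighborSet v := fun x hx =>
    c.toSubgraph.adj_sub hx
  have hcard : (c.toSubgraph.neighborSet v).encard = 2 := by
    rw [← (c.finite_neighborSet_toSubgraph).cast_ncard_eq,
      hc.ncard_neighborSet_toSubgraph_eq_two hv]
    rfl
  have heq :=
    (c.finite_neighborSet_toSubgraph).eq_of_subset_of_encard_le hsub (h2.trans hcard.ge)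
  rw [← Walk.adj_toSubgraph_iff_mem_edges]
  exact (heq ▸ hw : w ∈ c.toSubgraph.neighborSet v)

theorem chordless_of_forall_adj
    (h : ∀ u w, G.Adj u w → (G.neighborSet u).encard ≤ 2 ∨ (G.neighborSet w).encard ≤ 2) :
    Chordless G := by
  intro v c hc _ u w hu hw huw
  rcases h u w huw with h2 | h2
  · exact hc.mem_edges_of_encard_neighborSet_le_two hu h2 huw
  · rw [Sym2.eq_swap]
    exact hc.mem_edges_of_encard_neighborSet_le_two hw h2 huw.symm

end Degree

theorem Sym2.exists_injective_mem_of_encard_le_two {V : Type} {D : Set (Sym2 V)}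
    (hD : ∀ e ∈ D, ¬ e.IsDiag) (h2 : ∀ v, {e | e ∈ D ∧ v ∈ e}.encard ≤ 2) :
    ∃ r : D → V, Function.Injective r ∧ ∀ e : D, r e ∈ (e : Sym2 V) := by
  classical
  let t : D → Finset V := fun e => (e : Sym2 V).toFinset
  suffices hall : ∀ s : Finset D, s.card ≤ (s.biUnion t).card by
    obtain ⟨r, hinj, hr⟩ := (Finset.all_card_le_biUnion_card_iff_exists_injective t).mp hall
    exact ⟨r, hinj, fun e => Sym2.mem_toFinset.mp (hr e)⟩
  intro s
  -- double counting of the incidences between `s` and the vertices it covers: two per edge,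
  -- at most two per vertex
  have := Finset.card_mul_le_card_mul (fun (e : D) v => v ∈ (e : Sym2 V)) (m := 2) (n := 2)
    (s := s) (t := s.biUnion t) ?_ ?_
  · omega
  · intro e he
    have : (s.biUnion t).bipartiteAbove (fun (e : D) v => v ∈ (e : Sym2 V)) e = t e := by
      ext v
      simp only [Finset.mem_bipartiteAbove, Finset.mem_biUnion, t, Sym2.mem_toFinset]
      exact ⟨fun h => h.2, fun h => ⟨⟨e, he, h⟩, h⟩⟩
    rw [this, Sym2.card_toFinset_of_not_isDiag _ (hD e e.2)]
  · intro v _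
    have hsub : (((s.bipartiteBelow (fun (e : D) v => v ∈ (e : Sym2 V)) v).image
        Subtype.val : Finset (Sym2 V)) : Set (Sym2 V)) ⊆ {e | e ∈ D ∧ v ∈ e} := by
      intro e
      simp only [Finset.coe_image, Set.mem_image, Finset.mem_coe, Finset.mem_bipartiteBelow]
      rintro ⟨e, ⟨-, hv⟩, rfl⟩
      exact ⟨e.2, hv⟩
    have := (Set.encard_le_encard hsub).trans (h2 v)
    rw [Set.encard_coe_eq_coe_finsetCard, Finset.card_image_of_injective _ Subtype.val_injective]
      at this
    exact_mod_cast this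

namespace IsSubdivisionWith

variable {α β : Type} {H : SimpleGraph α} {G : SimpleGraph β} {f : α → β}
  {P : ∀ u v : α, H.Adj u v → G.Walk (f u) (f v)}

theorem exists_adj (hs : IsSubdivisionWith H G f P) (v : β) : ∃ w, G.Adj v w := by
  obtain ⟨u, u', h, hv⟩ := hs.2.2.2.2.2.1 v
  have hne : f u ≠ f u' := fun hf => h.ne (hs.1 hf)
  obtain ⟨e, he, hve⟩ := (Walk.mem_support_iff_exists_mem_edges_of_not_nil
    (Walk.not_nil_of_ne hne)).mp hv
  obtain ⟨w, rfl⟩ := Sym2.mem_iff_exists.mp hve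
  exact ⟨w, (P u u' h).edges_subset_edgeSet he⟩

theorem exists_mem_edges (hs : IsSubdivisionWith H G f P) {e : Sym2 β} (he : e ∈ G.edgeSet) :
    ∃ u v h, e ∈ (P u v h).edges := by
  induction e using Sym2.ind with
  | _ x y => exact (hs.2.2.2.2.2.2 x y).mp he

theorem mem_edges_iff_of_sym2_eq (hs : IsSubdivisionWith H G f P) {u v u' v' : α}
    (h : H.Adj u v) (h' : H.Adj u' v') (huv : s(u, v) = s(u', v')) {e : Sym2 β} :
    e ∈ (P u v h).edges ↔ e ∈ (P u' v' h').edges := by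
  rcases Sym2.eq_iff.mp huv with ⟨rfl, rfl⟩ | ⟨rfl, rfl⟩
  · rfl
  · rw [hs.2.2.1 u v h, Walk.edges_reverse, List.mem_reverse]

theorem sym2_eq_of_mem_edges (hs : IsSubdivisionWith H G f P) {u v u' v' : α}
    {h : H.Adj u v} {h' : H.Adj u' v'} {e : Sym2 β} (he : e ∈ (P u v h).edges)
    (he' : e ∈ (P u' v' h').edges) : s(u, v) = s(u', v') := by
  by_contra hne
  induction e using Sym2.ind with
  | _ x y =>
  have hxy : x ≠ y := ((P u v h).adj_of_mem_edges he).ne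
  have hx := hs.2.2.2.1 u v h u' v' h' hne x (Walk.fst_mem_support_of_mem_edges _ he)
    (Walk.fst_mem_support_of_mem_edges _ he')
  have hy := hs.2.2.2.1 u v h u' v' h' hne y (Walk.snd_mem_support_of_mem_edges _ he)
    (Walk.snd_mem_support_of_mem_edges _ he')
  have h1 : s(f u, f v) = s(x, y) := (Sym2.mem_and_mem_iff hxy).mp
    ⟨by rcases hx.1 with rfl | rfl <;> simp, by rcases hy.1 with rfl | rfl <;> simp⟩
  have h2 : s(f u', f v') = s(x, y) := (Sym2.mem_and_mem_iff hxy).mp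
    ⟨by rcases hx.2 with rfl | rfl <;> simp, by rcases hy.2 with rfl | rfl <;> simp⟩
  apply hne
  apply Sym2.map.injective hs.1
  simp only [Sym2.map_mk, h1, h2]

theorem neighborSet_subset_image_snd [DecidableRel H.Adj] (hs : IsSubdivisionWith H G f P)
    (u : α) : G.neighborSet (f u) ⊆
      (fun w => if h : H.Adj u w then (P u w h).snd else f u) '' H.neighborSet u := by
  obtain ⟨hinj, hpath, hrev, -, hint, -, hadj⟩ := hs
  intro x hx
  obtain ⟨u₁, v₁, h₁, hmem⟩ := (hadj (f u) x).mp hx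
  have hend : f u = f u₁ ∨ f u = f v₁ := by
    by_contra! hc
    exact hint u₁ v₁ h₁ (f u) (Walk.fst_mem_support_of_mem_edges _ hmem) hc.1 hc.2 u rfl
  obtain ⟨w, hw, hmem⟩ : ∃ w, ∃ hw : H.Adj u w, s(f u, x) ∈ (P u w hw).edges := by
    rcases hend with h | h <;> obtain rfl := hinj h
    · exact ⟨v₁, h₁, hmem⟩
    · exact ⟨u₁, h₁.symm, by rwa [hrev, Walk.edges_reverse, List.mem_reverse]⟩
  refine ⟨w, hw, ?_⟩
  have hnil : ¬ (P u w hw).Nil := Walk.not_nil_of_ne fun h => hw.ne (hinj h)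
  have := (hpath u w hw).neighborSet_toSubgraph_startpoint hnil
  rw [Set.ext_iff] at this
  simp only [dif_pos hw]
  exact ((this x).mp (Walk.adj_toSubgraph_iff_mem_edges.mpr hmem)).symm

theorem encard_neighborSet_le_two_of_forall_ne (hs : IsSubdivisionWith H G f P) {v : β}
    (hv : ∀ u, f u ≠ v) : (G.neighborSet v).encard ≤ 2 := by
  have ⟨_, hpath, _, hdisj, _, hcov, hadj⟩ := hs
  -- `v` is an inner vertex of one path, and all its edges lie on that path
  obtain ⟨u₁, v₁, h₁, hmem⟩ := hcov v
  have hsub : G.neighborSet v ⊆ (P u₁ v₁ h₁).toSubgraph.neighborSet v := by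
    intro x hx
    obtain ⟨u₂, v₂, h₂, hmem₂⟩ := (hadj v x).mp hx
    have heq : s(u₂, v₂) = s(u₁, v₁) := by
      by_contra hne
      rcases (hdisj u₂ v₂ h₂ u₁ v₁ h₁ hne v (Walk.fst_mem_support_of_mem_edges _ hmem₂)
        hmem).2 with h | h
      exacts [hv u₁ h.symm, hv v₁ h.symm]
    exact Walk.adj_toSubgraph_iff_mem_edges.mpr
      ((hs.mem_edges_iff_of_sym2_eq h₂ h₁ heq).mp hmem₂)
  obtain ⟨i, rfl, hi⟩ := Walk.mem_support_iff_exists_getVert.mp hmem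
  have hi0 : i ≠ 0 := by rintro rfl; exact hv u₁ (Walk.getVert_zero _).symm
  have hil : i < (P u₁ v₁ h₁).length := lt_of_le_of_ne hi fun h => by
    subst h; exact hv v₁ (Walk.getVert_length _).symm
  calc (G.neighborSet _).encard ≤ ((P u₁ v₁ h₁).toSubgraph.neighborSet _).encard :=
        Set.encard_le_encard hsub
    _ = 2 := by
      rw [← (Walk.finite_neighborSet_toSubgraph _).cast_ncard_eq,
        (hpath u₁ v₁ h₁).ncard_neighborSet_toSubgraph_internal_eq_two hi0 hil]
      rfl

theorem encard_neighborSet_le (hs : IsSubdivisionWith H G f P) {k : ℕ∞} (hk : 2 ≤ k)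
    (hH : ∀ u, (H.neighborSet u).encard ≤ k) (v : β) : (G.neighborSet v).encard ≤ k := by
  classical
  by_cases hv : ∃ u, f u = v
  · obtain ⟨u, rfl⟩ := hv
    exact (Set.encard_le_encard (hs.neighborSet_subset_image_snd u)).trans
      ((Set.encard_image_le _ _).trans (hH u))
  · exact (hs.encard_neighborSet_le_two_of_forall_ne (not_exists.mp hv)).trans hk

end IsSubdivisionWith

theorem encard_neighborSet_elemWall_le_three (n m : ℕ) (u : WallV n m) :
    ((elemWall n m).neighborSet u).encard ≤ 3 := by
  -- a wall vertex has at most a right, a left and a vertical neighbour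
  let d := if 2 ≤ u.1.1 ∧ u.1.1 < n then 1 else 2
  have hsub : Subtype.val '' (elemWall n m).neighborSet u ⊆ {(u.1.1, u.1.2 + d), (u.1.1, u.1.2 - d),
      if u.1.1 % 2 = u.1.2 % 2 then (u.1.1 + 1, u.1.2) else (u.1.1 - 1, u.1.2)} := by
    rintro _ ⟨w, ⟨-, hw⟩, rfl⟩
    simp only [wallEdge, Nat.odd_iff, Nat.even_iff] at hw
    simp only [Set.mem_insert_iff, Set.mem_singleton_iff, Prod.ext_iff, d]
    rcases hw with (⟨_, _, j, _⟩ | ⟨_⟩ | ⟨_, _, _, j, _⟩ | ⟨_, _, _, j, _⟩ | ⟨_⟩ | ⟨_⟩) |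
      (⟨_, _, j, _⟩ | ⟨_⟩ | ⟨_, _, _, j, _⟩ | ⟨_, _, _, j, _⟩ | ⟨_⟩ | ⟨_⟩) <;>
      split_ifs <;> omega
  calc _ = (Subtype.val '' (elemWall n m).neighborSet u).encard :=
        (Subtype.val_injective.encard_image _).symm
    _ ≤ _ := Set.encard_le_encard hsub
    _ ≤ 3 := (Set.encard_insert_le _ _).trans (by
        grw [Set.encard_insert_le, Set.encard_singleton]; norm_num)

namespace SimpleGraph

variable {V : Type} (W : SimpleGraph V) (S : Set (Sym2 V))

def subdivideEdges : SimpleGraph (V ⊕ S) where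
  Adj
    | inl a, inl b => W.Adj a b ∧ s(a, b) ∉ S
    | inl a, inr e => a ∈ (e : Sym2 V)
    | inr e, inl a => a ∈ (e : Sym2 V)
    | inr _, inr _ => False
  symm := ⟨by
    rintro (a | e) (b | e') h
    exacts [⟨h.1.symm, Sym2.eq_swap ▸ h.2⟩, h, h, h]⟩
  loopless := ⟨by
    rintro (a | e) h
    exacts [h.1.ne rfl, h]⟩

variable {W S}

@[simp] theorem subdivideEdges_adj_inl_inl {a b : V} :
    (W.subdivideEdges S).Adj (inl a) (inl b) ↔ W.Adj a b ∧ s(a, b) ∉ S := Iff.rfl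

@[simp] theorem subdivideEdges_adj_inl_inr {a : V} {e : S} :
    (W.subdivideEdges S).Adj (inl a) (inr e) ↔ a ∈ (e : Sym2 V) := Iff.rfl

@[simp] theorem subdivideEdges_adj_inr_inl {a : V} {e : S} :
    (W.subdivideEdges S).Adj (inr e) (inl a) ↔ a ∈ (e : Sym2 V) := Iff.rfl

open scoped Classical in
noncomputable def Walk.subdivide :
    ∀ {a b : V}, W.Walk a b → (W.subdivideEdges S).Walk (inl a) (inl b)
  | _, _, .nil => .nil
  | a, _, .cons (v := c) h q =>
    if hS : s(a, c) ∈ S then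
      .cons (subdivideEdges_adj_inl_inr (e := ⟨s(a, c), hS⟩).mpr (Sym2.mem_mk_left a c))
        (.cons (subdivideEdges_adj_inr_inl.mpr (Sym2.mem_mk_right a c)) q.subdivide)
    else .cons (subdivideEdges_adj_inl_inl.mpr ⟨h, hS⟩) q.subdivide

namespace Walk

variable {a b c : V}

@[simp] theorem subdivide_nil : (nil : W.Walk a a).subdivide (S := S) = nil := rfl

theorem subdivide_cons_of_mem (h : W.Adj a c) (q : W.Walk c b) (hS : s(a, c) ∈ S) :
    (cons h q).subdivide (S := S) =
      .cons (subdivideEdges_adj_inl_inr (e := ⟨s(a, c), hS⟩).mpr (Sym2.mem_mk_left a c))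
        (.cons (subdivideEdges_adj_inr_inl.mpr (Sym2.mem_mk_right a c)) q.subdivide) := by
  rw [subdivide, dif_pos hS]

theorem subdivide_cons_of_not_mem (h : W.Adj a c) (q : W.Walk c b) (hS : s(a, c) ∉ S) :
    (cons h q).subdivide (S := S) =
      .cons (subdivideEdges_adj_inl_inl.mpr ⟨h, hS⟩) q.subdivide := by
  rw [subdivide, dif_neg hS]

theorem subdivide_append {a b c : V} (p : W.Walk a b) (q : W.Walk b c) :
    (p.append q).subdivide (S := S) = p.subdivide.append q.subdivide := by
  induction p with
  | nil => rfl
  | @cons a c' b h p ih =>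
    by_cases hS : s(a, c') ∈ S
    · simp [subdivide_cons_of_mem h _ hS, ih]
    · simp [subdivide_cons_of_not_mem h _ hS, ih]

theorem subdivide_reverse (p : W.Walk a b) :
    p.reverse.subdivide (S := S) = p.subdivide.reverse := by
  induction p with
  | nil => rfl
  | @cons a c' b h p ih =>
    rw [reverse_cons, subdivide_append, ih]
    apply ext_support
    by_cases hS : s(a, c') ∈ S
    · have hS' : s(c', a) ∈ S := Sym2.eq_swap ▸ hS
      simp [subdivide_cons_of_mem h _ hS, subdivide_cons_of_mem h.symm _ hS', support_append,
        Sym2.eq_swap]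
    · have hS' : s(c', a) ∉ S := Sym2.eq_swap ▸ hS
      simp [subdivide_cons_of_not_mem h _ hS, subdivide_cons_of_not_mem h.symm _ hS']

theorem inl_mem_support_subdivide {x : V} (p : W.Walk a b) :
    inl x ∈ (p.subdivide (S := S)).support ↔ x ∈ p.support := by
  induction p with
  | nil => simp [subdivide]
  | @cons a c' b h p ih =>
    by_cases hS : s(a, c') ∈ S
    · simp [subdivide_cons_of_mem h _ hS, ih]
    · simp [subdivide_cons_of_not_mem h _ hS, ih]

theorem inr_mem_support_subdivide {e : S} (p : W.Walk a b) :
    inr e ∈ (p.subdivide (S := S)).support ↔ (e : Sym2 V) ∈ p.edges := by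
  induction p with
  | nil => simp [subdivide]
  | @cons a c' b h p ih =>
    by_cases hS : s(a, c') ∈ S
    · simp [subdivide_cons_of_mem h _ hS, ih, Subtype.ext_iff, eq_comm]
    · have : (e : Sym2 V) ≠ s(a, c') := fun he => hS (he ▸ e.2)
      simp [subdivide_cons_of_not_mem h _ hS, ih, this]

theorem map_inl_mem_edges_subdivide {e : Sym2 V} (p : W.Walk a b) (he : e ∈ p.edges)
    (hS : e ∉ S) : e.map inl ∈ (p.subdivide (S := S)).edges := by
  induction p with
  | nil => simp at he
  | @cons a c' b h p ih =>
    rw [edges_cons, List.mem_cons] at he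
    by_cases hS' : s(a, c') ∈ S
    · have : e ≠ s(a, c') := fun h => hS (h ▸ hS')
      simp [subdivide_cons_of_mem h _ hS', ih (he.resolve_left this)]
    · rcases he with rfl | he
      · simp [subdivide_cons_of_not_mem h _ hS']
      · simp [subdivide_cons_of_not_mem h _ hS', ih he]

theorem mem_edges_subdivide_of_mem {e : S} {x : V} (p : W.Walk a b)
    (he : (e : Sym2 V) ∈ p.edges) (hx : x ∈ (e : Sym2 V)) :
    s(inl x, inr e) ∈ (p.subdivide (S := S)).edges := by
  induction p with
  | nil => simp at he
  | @cons a c' b h p ih =>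
    rw [edges_cons, List.mem_cons] at he
    by_cases hS : s(a, c') ∈ S
    · rcases he with he | he
      · obtain rfl : e = ⟨s(a, c'), hS⟩ := Subtype.ext he
        rcases Sym2.mem_iff.mp hx with rfl | rfl
        · simp [subdivide_cons_of_mem h _ hS]
        · simp [subdivide_cons_of_mem h _ hS, Sym2.eq_swap]
      · simp [subdivide_cons_of_mem h _ hS, ih he]
    · have : (e : Sym2 V) ≠ s(a, c') := fun h => hS (h ▸ e.2)
      simp [subdivide_cons_of_not_mem h _ hS, ih (he.resolve_left this)]

theorem IsPath.subdivide {p : W.Walk a b} (hp : p.IsPath) : (p.subdivide (S := S)).IsPath := by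
  induction p with
  | nil => simp
  | @cons a c' b h p ih =>
    rw [cons_isPath_iff] at hp
    have ha : s(a, c') ∉ p.edges := fun h => hp.2 (p.fst_mem_support_of_mem_edges h)
    by_cases hS : s(a, c') ∈ S
    · simp [subdivide_cons_of_mem h _ hS, ih hp.1, inl_mem_support_subdivide,
        inr_mem_support_subdivide, hp.2, ha]
    · simp [subdivide_cons_of_not_mem h _ hS, ih hp.1, inl_mem_support_subdivide, hp.2]

end Walk

theorem encard_neighborSet_subdivideEdges_inl_le (hS : S ⊆ W.edgeSet) (a : V) :
    ((W.subdivideEdges S).neighborSet (inl a)).encard ≤ (W.neighborSet a).encard := by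
  classical
  have hsub : (W.subdivideEdges S).neighborSet (inl a) ⊆
      (fun b => if h : s(a, b) ∈ S then inr ⟨s(a, b), h⟩ else inl b) '' W.neighborSet a := by
    rintro (b | ⟨e, he⟩) hab
    · exact ⟨b, hab.1, by simp [hab.2]⟩
    · obtain ⟨b, rfl⟩ := Sym2.mem_iff_exists.mp (show a ∈ e from hab)
      exact ⟨b, hS he, by simp [he]⟩
  exact (Set.encard_le_encard hsub).trans (Set.encard_image_le _ _)

theorem encard_neighborSet_subdivideEdges_inr_le_two (e : S) :
    ((W.subdivideEdges S).neighborSet (inr e)).encard ≤ 2 := by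
  obtain ⟨e, he⟩ := e
  induction e using Sym2.ind with | _ x y =>
  have hsub : (W.subdivideEdges S).neighborSet (inr ⟨s(x, y), he⟩) ⊆ {inl x, inl y} := by
    rintro (z | e') hz
    · simpa using (show z ∈ s(x, y) from hz)
    · exact hz.elim
  exact (Set.encard_le_encard hsub).trans ((Set.encard_insert_le _ _).trans (by simp; rfl))

theorem chordless_subdivideEdges (hS : S ⊆ W.edgeSet)
    (h : ∀ a b, W.Adj a b → s(a, b) ∉ S →
      (W.neighborSet a).encard ≤ 2 ∨ (W.neighborSet b).encard ≤ 2) :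
    Chordless (W.subdivideEdges S) := by
  apply chordless_of_forall_adj
  rintro (a | e) (b | e') hab
  · exact (h a b hab.1 hab.2).imp
      (encard_neighborSet_subdivideEdges_inl_le hS a).trans
      (encard_neighborSet_subdivideEdges_inl_le hS b).trans
  · exact .inr (encard_neighborSet_subdivideEdges_inr_le_two e')
  · exact .inl (encard_neighborSet_subdivideEdges_inr_le_two e)
  · exact hab.elim

end SimpleGraph

theorem IsSubdivisionWith.subdivideEdges {α V : Type} {H : SimpleGraph α} {W : SimpleGraph V}
    {f : α → V} {P : ∀ u v : α, H.Adj u v → W.Walk (f u) (f v)} (hs : IsSubdivisionWith H W f P)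
    {S : Set (Sym2 V)} (hS : S ⊆ W.edgeSet) :
    IsSubdivisionWith H (W.subdivideEdges S) (inl ∘ f) (fun u v h => (P u v h).subdivide) := by
  have ⟨hinj, hpath, hrev, hdisj, hint, hcov, _⟩ := hs
  refine ⟨inl_injective.comp hinj, fun u v h => (hpath u v h).subdivide,
    fun u v h => by simp only [hrev u v h, Walk.subdivide_reverse], ?_, ?_, ?_, ?_⟩
  · rintro u v h u' v' h' hne (x | e) hx hx'
    · simp only [Walk.inl_mem_support_subdivide, Function.comp_apply, inl.injEq] at hx hx' ⊢
      exact hdisj u v h u' v' h' hne x hx hx'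
    · rw [Walk.inr_mem_support_subdivide] at hx hx'
      exact absurd (hs.sym2_eq_of_mem_edges hx hx') hne
  · rintro u v h (x | e) hx hxu hxv z
    · simp only [Walk.inl_mem_support_subdivide, Function.comp_apply, ne_eq, inl.injEq]
        at hx hxu hxv ⊢
      exact hint u v h x hx hxu hxv z
    · simp
  · rintro (x | e)
    · obtain ⟨u, v, h, hx⟩ := hcov x
      exact ⟨u, v, h, (Walk.inl_mem_support_subdivide _).mpr hx⟩
    · obtain ⟨u, v, h, he⟩ := hs.exists_mem_edges (hS e.2)
      exact ⟨u, v, h, (Walk.inr_mem_support_subdivide _).mpr he⟩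
  · intro w x
    refine ⟨fun hwx => ?_, fun ⟨u, v, h, hwx⟩ => Walk.adj_of_mem_edges _ hwx⟩
    rcases w with a | e <;> rcases x with b | e'
    · obtain ⟨u, v, h, hab⟩ := hs.exists_mem_edges (W.mem_edgeSet.mpr hwx.1)
      exact ⟨u, v, h, Walk.map_inl_mem_edges_subdivide _ hab hwx.2⟩
    · obtain ⟨u, v, h, he⟩ := hs.exists_mem_edges (hS e'.2)
      exact ⟨u, v, h, Walk.mem_edges_subdivide_of_mem _ he hwx⟩
    · obtain ⟨u, v, h, he⟩ := hs.exists_mem_edges (hS e.2)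
      exact ⟨u, v, h, Sym2.eq_swap ▸ Walk.mem_edges_subdivide_of_mem _ he hwx⟩
    · exact hwx.elim

section Claims

variable {V : Type} (W : SimpleGraph V) (c : V → Sym2 V)

def Claims (x : V) (e : Sym2 V) : Prop := x ∈ e ∧ (HasThreeNbrs W x ∨ c x = e)

def claimedTwice : Set (Sym2 V) := {e | e ∈ W.edgeSet ∧ ∀ x ∈ e, Claims W c x e}

structure IsClaimChoice : Prop where
  mem_edgeSet : ∀ v, ¬ HasThreeNbrs W v → c v ∈ W.edgeSet
  mem : ∀ v, ¬ HasThreeNbrs W v → v ∈ c v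
  exists_claims : ∀ e ∈ W.edgeSet, ∃ x, Claims W c x e

/-- Adjacency of the vertices of `RepGraph W` written in terms of their base vertices and of
the edges they stand for. -/
def ClaimAdj (x : V) (e : Sym2 V) (y : V) (f : Sym2 V) : Prop :=
  x = y ∨ (W.Adj x y ∧ (HasThreeNbrs W x → e = s(x, y)) ∧ (HasThreeNbrs W y → f = s(x, y)))

variable {W c}

theorem ClaimAdj.symm {x y : V} {e f : Sym2 V} (h : ClaimAdj W x e y f) :
    ClaimAdj W y f x e := by
  rcases h with rfl | ⟨hxy, hx, hy⟩
  exacts [.inl rfl, .inr ⟨hxy.symm, fun h => (hy h).trans Sym2.eq_swap,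
    fun h => (hx h).trans Sym2.eq_swap⟩]

theorem claimedTwice_subset_edgeSet : claimedTwice W c ⊆ W.edgeSet := fun _ he => he.1

theorem mem_claimedTwice {e : Sym2 V} {x y : V} (he : e ∈ W.edgeSet) (hx : Claims W c x e)
    (hy : Claims W c y e) (hxy : x ≠ y) : e ∈ claimedTwice W c := by
  refine ⟨he, fun z hz => ?_⟩
  rw [(Sym2.mem_and_mem_iff hxy).mp ⟨hx.1, hy.1⟩, Sym2.mem_iff] at hz
  rcases hz with rfl | rfl
  exacts [hx, hy]

theorem Claims.eq {x : V} {e g : Sym2 V} (he : Claims W c x e) (hg : Claims W c x g)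
    (hx : ¬ HasThreeNbrs W x) : e = g :=
  (he.2.resolve_left hx).symm.trans (hg.2.resolve_left hx)

theorem not_hasThreeNbrs_of_not_mem_claimedTwice {a b : V} (hab : W.Adj a b)
    (hS : s(a, b) ∉ claimedTwice W c) : ¬ HasThreeNbrs W a ∨ ¬ HasThreeNbrs W b := by
  by_contra! h
  exact hS (mem_claimedTwice hab ⟨Sym2.mem_mk_left a b, .inl h.1⟩
    ⟨Sym2.mem_mk_right a b, .inl h.2⟩ hab.ne)

theorem exists_isClaimChoice (hnb : ∀ v, ∃ w, W.Adj v w) : ∃ c, IsClaimChoice W c := by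
  classical
  let D : Set (Sym2 V) := {e | e ∈ W.edgeSet ∧ ∀ x ∈ e, ¬ HasThreeNbrs W x}
  have hD2 : ∀ v, {e | e ∈ D ∧ v ∈ e}.encard ≤ 2 := by
    intro v
    by_cases hv : HasThreeNbrs W v
    · rw [Set.encard_eq_zero.mpr (Set.eq_empty_of_forall_notMem fun e he => he.1.2 v he.2 hv)]
      exact zero_le
    have hsub : {e | e ∈ D ∧ v ∈ e} ⊆ (fun w => s(v, w)) '' W.neighborSet v := by
      rintro e ⟨⟨he, -⟩, hve⟩
      obtain ⟨w, rfl⟩ := Sym2.mem_iff_exists.mp hve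
      exact ⟨w, he, rfl⟩
    exact (Set.encard_le_encard hsub).trans
      ((Set.encard_image_le _ _).trans (encard_neighborSet_le_two_of_not_hasThreeNbrs hv))
  obtain ⟨r, hinj, hr⟩ :=
    Sym2.exists_injective_mem_of_encard_le_two (fun e he => W.not_isDiag_of_mem_edgeSet he.1) hD2
  choose nb hnb using hnb
  refine ⟨fun v => if h : ∃ e, r e = v then h.choose else s(v, nb v), ?_, ?_, ?_⟩
  · intro v _
    split_ifs with h
    exacts [h.choose.2.1, hnb v]
  · intro v _
    split_ifs with h
    exacts [by simpa [h.choose_spec] using hr h.choose, Sym2.mem_mk_left _ _]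
  · intro e he
    by_cases hD : ∀ x ∈ e, ¬ HasThreeNbrs W x
    · refine ⟨r ⟨e, he, hD⟩, hr _, .inr ?_⟩
      have h : ∃ e', r e' = r ⟨e, he, hD⟩ := ⟨_, rfl⟩
      simp only [dif_pos h, hinj h.choose_spec]
    · push Not at hD
      obtain ⟨x, hx, h3⟩ := hD
      exact ⟨x, hx, .inl h3⟩

theorem IsClaimChoice.eq_of_claims {x y t : V} (hc : IsClaimChoice W c) (hxt : W.Adj x t)
    (hyt : W.Adj y t) (hx : Claims W c x s(x, t)) (hy : Claims W c y s(y, t))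
    (hxS : s(x, t) ∉ claimedTwice W c) (hyS : s(y, t) ∉ claimedTwice W c) : x = y := by
  by_contra hxy
  by_cases ht : HasThreeNbrs W t
  · exact hxS (mem_claimedTwice hxt hx ⟨Sym2.mem_mk_right x t, .inl ht⟩ hxt.ne)
  -- otherwise `t` has only the neighbours `x` and `y`, so its own edge `c t` is one of the two
  obtain ⟨u, hu⟩ := Sym2.mem_iff_exists.mp (hc.mem t ht)
  have htu : W.Adj t u := by rw [← W.mem_edgeSet, ← hu]; exact hc.mem_edgeSet t ht
  rcases eq_or_eq_of_not_hasThreeNbrs ht hxt.symm hyt.symm htu hxy with rfl | rfl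
  · exact hxS (mem_claimedTwice hxt hx ⟨Sym2.mem_mk_right _ _, .inr (hu.trans Sym2.eq_swap)⟩
      hxt.ne)
  · exact hyS (mem_claimedTwice hyt hy ⟨Sym2.mem_mk_right _ _, .inr (hu.trans Sym2.eq_swap)⟩
      hyt.ne)

theorem chordless_subdivideEdges_claimedTwice :
    Chordless (W.subdivideEdges (claimedTwice W c)) :=
  chordless_subdivideEdges claimedTwice_subset_edgeSet fun _ _ hab hS =>
    (not_hasThreeNbrs_of_not_mem_claimedTwice hab hS).imp
      encard_neighborSet_le_two_of_not_hasThreeNbrs encard_neighborSet_le_two_of_not_hasThreeNbrs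

end Claims

section RepGraph

variable {V : Type} {W : SimpleGraph V}

abbrev RepVert (W : SimpleGraph V) : Type := {x : V ⊕ V × Sym2 V // RepVertP W x}

def repBase : V ⊕ V × Sym2 V → V
  | inl v => v
  | inr (v, _) => v

def repEdge (c : V → Sym2 V) : V ⊕ V × Sym2 V → Sym2 V
  | inl v => c v
  | inr (_, e) => e

theorem repGraph_adj_iff (c : V → Sym2 V) (x y : RepVert W) :
    (RepGraph W).Adj x y ↔
      x ≠ y ∧ ClaimAdj W (repBase x.1) (repEdge c x.1) (repBase y.1) (repEdge c y.1) := by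
  obtain ⟨v | ⟨v, e⟩, hx⟩ := x <;> obtain ⟨w | ⟨w, f⟩, hy⟩ := y <;>
    simp only [RepVertP] at hx hy <;>
    simp [RepGraph, repAdjAux, ClaimAdj, repBase, repEdge, hx, hy]
  · intro hne
    rw [W.adj_comm w v, or_self, or_iff_right]
    rintro rfl
    exact hne rfl
  · intro _
    rw [Sym2.eq_swap (a := w), or_self, or_iff_right fun (h : v = w) => hx (h ▸ hy.1)]
    exact ⟨fun h => ⟨W.mem_edgeSet.mp (h ▸ hy.2.1), h⟩, And.right⟩
  · intro _
    rw [Sym2.eq_swap (a := w), or_self, or_iff_right fun (h : v = w) => hy (h ▸ hx.1)]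
    exact ⟨fun h => ⟨W.mem_edgeSet.mp (h ▸ hx.2.1), h⟩, And.right⟩
  · intro _
    rcases eq_or_ne v w with rfl | hvw
    · simp
    simp only [hvw, hvw.symm, false_or, Sym2.eq_swap (a := w)]
    constructor
    · rintro (⟨rfl, rfl⟩ | ⟨rfl, rfl⟩) <;> exact ⟨W.mem_edgeSet.mp hx.2.1, rfl, rfl⟩
    · exact fun ⟨_, he, hf⟩ => .inl ⟨he.trans hf.symm, he⟩

theorem encard_neighborSet_repGraph_le (x : RepVert W) :
    ((RepGraph W).neighborSet x).encard ≤ (W.neighborSet (repBase x.1)).encard := by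
  classical
  let endAt : V → Sym2 V → V ⊕ V × Sym2 V := fun w e =>
    if HasThreeNbrs W w then inr (w, e) else inl w
  -- every neighbour of `x` is the vertex at the far end of an edge `s(v, w)` at its base `v`,
  -- or, for a triangle vertex, another vertex of its triangle
  let g : V → V ⊕ V × Sym2 V := match x.1 with
    | inl v => fun w => endAt w s(v, w)
    | inr (v, e) => fun w => if s(v, w) = e then endAt w e else inr (v, s(v, w))
  suffices hsub :
      Subtype.val '' (RepGraph W).neighborSet x ⊆ g '' W.neighborSet (repBase x.1) by
    rw [← Subtype.val_injective.encard_image]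
    exact (Set.encard_le_encard hsub).trans (Set.encard_image_le _ _)
  rintro _ ⟨⟨y, hy⟩, hxy, rfl⟩
  obtain ⟨v | ⟨v, e⟩, hx⟩ := x <;> obtain _ | ⟨w, f⟩ := y <;>
    simp only [RepVertP] at hx hy <;>
    simp only [mem_neighborSet, RepGraph, repAdjAux, ne_eq] at hxy <;>
    simp only [repBase, g, endAt]
  · exact ⟨_, hxy.2.elim id Adj.symm, by simp [hy]⟩
  · obtain rfl : f = s(v, w) := hxy.2.elim id (·.trans Sym2.eq_swap)
    exact ⟨w, hy.2.1, by simp [hy.1]⟩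
  · obtain rfl : e = s(v, _) := hxy.2.elim id (·.trans Sym2.eq_swap)
    exact ⟨_, hx.2.1, by simp [hy]⟩
  · obtain ⟨hne, h⟩ := hxy
    have h' : v = w ∨ e = f ∧ e = s(v, w) := by
      rcases h with (h | h) | (h | ⟨h₁, h₂⟩)
      exacts [.inl h, .inr h, .inl h.symm,
        .inr ⟨h₁.symm, h₁.symm.trans (h₂.trans Sym2.eq_swap)⟩]
    rcases h' with rfl | ⟨rfl, rfl⟩
    · obtain ⟨u, rfl⟩ := Sym2.mem_iff_exists.mp hy.2.2
      have hfe : s(v, u) ≠ e := fun h => hne (by simp [h])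
      exact ⟨u, hy.2.1, by simp [hfe]⟩
    · exact ⟨w, hx.2.1, by simp [hy.1]⟩

end RepGraph

section Iso

variable {V : Type} {W : SimpleGraph V} {c : V → Sym2 V}

theorem IsClaimChoice.claims_repEdge (hc : IsClaimChoice W c) (x : RepVert W) :
    repEdge c x.1 ∈ W.edgeSet ∧ Claims W c (repBase x.1) (repEdge c x.1) := by
  obtain ⟨v | ⟨v, e⟩, hx⟩ := x
  · exact ⟨hc.mem_edgeSet v hx, hc.mem v hx, .inr rfl⟩
  · exact ⟨hx.2.1, hx.2.2, .inl hx.1⟩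

theorem repVert_ext {x y : RepVert W} (hb : repBase x.1 = repBase y.1)
    (he : repEdge c x.1 = repEdge c y.1) : x = y := by
  obtain ⟨v | ⟨v, e⟩, hx⟩ := x <;> obtain ⟨w | ⟨w, f⟩, hy⟩ := y <;>
    simp only [repBase, repEdge, RepVertP] at hb he hx hy <;> subst hb
  · rfl
  · exact (hx hy.1).elim
  · exact (hy hx.1).elim
  · subst he; rfl

theorem exists_repVert {v : V} {e : Sym2 V} (he : e ∈ W.edgeSet) (hv : Claims W c v e) :
    ∃ x : RepVert W, repBase x.1 = v ∧ repEdge c x.1 = e := by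
  by_cases h : HasThreeNbrs W v
  · exact ⟨⟨inr (v, e), h, he, hv.1⟩, rfl, rfl⟩
  · exact ⟨⟨inl v, h⟩, rfl, hv.2.resolve_left h⟩

variable (S : Set (Sym2 V))

open scoped Classical in
noncomputable def piece (x : V) (e : Sym2 V) : Sym2 (V ⊕ S) :=
  if h : e ∈ S then s(inl x, inr ⟨e, h⟩) else e.map inl

variable {S} {x t : V} {e : Sym2 V}

theorem inr_mem_piece {g : S} : inr g ∈ piece S x e ↔ e = g := by
  unfold piece
  split_ifs with h
  · simp [Subtype.ext_iff, eq_comm]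
  · simp only [Sym2.mem_map, reduceCtorEq, and_false, exists_false, false_iff]
    rintro rfl
    exact h g.2

theorem inl_mem_piece_of_mem (h : e ∈ S) : inl t ∈ piece S x e ↔ t = x := by
  simp [piece, h]

theorem inl_mem_piece_of_not_mem (h : e ∉ S) : inl t ∈ piece S x e ↔ t ∈ e := by
  simp [piece, h]

theorem inl_mem_piece_self (hx : x ∈ e) : inl x ∈ piece S x e := by
  by_cases h : e ∈ S <;> simp [piece, h, hx]

theorem eq_or_of_inl_mem_piece (hx : x ∈ e) (ht : inl t ∈ piece S x e) :
    t = x ∨ (e ∉ S ∧ e = s(x, t)) := by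
  by_cases h : e ∈ S
  · exact .inl ((inl_mem_piece_of_mem h).mp ht)
  rw [inl_mem_piece_of_not_mem h] at ht
  by_cases htx : t = x
  · exact .inl htx
  · exact .inr ⟨h, (Sym2.mem_and_mem_iff (Ne.symm htx)).mp ⟨hx, ht⟩⟩

theorem piece_mem_edgeSet (he : e ∈ W.edgeSet) (hx : x ∈ e) :
    piece S x e ∈ (W.subdivideEdges S).edgeSet := by
  by_cases h : e ∈ S
  · simpa [piece, h] using hx
  · obtain ⟨y, rfl⟩ := Sym2.mem_iff_exists.mp hx
    simpa [piece, h] using he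

variable {y : V} {f : Sym2 V}

theorem eq_of_piece_eq (he : e ∈ W.edgeSet) (hx : Claims W c x e) (hy : Claims W c y f)
    (h : piece (claimedTwice W c) x e = piece (claimedTwice W c) y f) : x = y ∧ e = f := by
  by_cases hS : e ∈ claimedTwice W c
  · obtain rfl : f = e := (inr_mem_piece (g := ⟨e, hS⟩)).mp (by rw [← h, inr_mem_piece])
    exact ⟨(inl_mem_piece_of_mem hS).mp (h ▸ inl_mem_piece_self hx.1), rfl⟩
  · have hfS : f ∉ claimedTwice W c := fun hfS =>
      hS ((inr_mem_piece (g := ⟨f, hfS⟩)).mp (by rw [h, inr_mem_piece]) ▸ hfS)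
    obtain rfl : e = f := Sym2.map.injective inl_injective (by simpa [piece, hS, hfS] using h)
    exact ⟨by_contra fun hxy => hS (mem_claimedTwice he hx hy hxy), rfl⟩

theorem exists_piece_eq (hc : IsClaimChoice W c) {d : Sym2 (V ⊕ claimedTwice W c)}
    (hd : d ∈ (W.subdivideEdges (claimedTwice W c)).edgeSet) :
    ∃ x e, e ∈ W.edgeSet ∧ Claims W c x e ∧ piece (claimedTwice W c) x e = d := by
  induction d using Sym2.ind with | _ a b =>
  rcases a with a | g <;> rcases b with b | g'
  · obtain ⟨x, hx⟩ := hc.exists_claims s(a, b) hd.1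
    exact ⟨x, s(a, b), hd.1, hx, by simp [piece, hd.2]⟩
  · exact ⟨a, g', g'.2.1, g'.2.2 a hd, by simp [piece, g'.2]⟩
  · exact ⟨b, g, g.2.1, g.2.2 b hd, by simp [piece, g.2, Sym2.eq_swap]⟩
  · exact hd.elim

theorem claimAdj_of_not_mem_claimedTwice (hy : Claims W c y f) (hf : f ∈ W.edgeSet)
    (hfS : f ∉ claimedTwice W c) (hfyx : f = s(y, x)) : ClaimAdj W x e y f := by
  by_cases hxy : x = y
  · exact .inl hxy
  refine .inr ⟨(W.mem_edgeSet.mp (hfyx ▸ hf)).symm, fun hx => ?_,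
    fun _ => hfyx.trans Sym2.eq_swap⟩
  exact (hfS (mem_claimedTwice hf ⟨hfyx ▸ Sym2.mem_mk_right y x, .inl hx⟩ hy hxy)).elim

theorem IsClaimChoice.claimAdj_of_mem_piece (hc : IsClaimChoice W c) (he : e ∈ W.edgeSet)
    (hf : f ∈ W.edgeSet) (hx : Claims W c x e) (hy : Claims W c y f) {z : V ⊕ claimedTwice W c}
    (hzx : z ∈ piece (claimedTwice W c) x e) (hzy : z ∈ piece (claimedTwice W c) y f) :
    ClaimAdj W x e y f := by
  rcases z with t | g
  · rcases eq_or_of_inl_mem_piece hx.1 hzx with rfl | ⟨heS, hex⟩ <;>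
      rcases eq_or_of_inl_mem_piece hy.1 hzy with hty | ⟨hfS, hfy⟩
    · exact .inl hty
    · exact claimAdj_of_not_mem_claimedTwice hy hf hfS hfy
    · exact (claimAdj_of_not_mem_claimedTwice hx he heS (hty ▸ hex)).symm
    · exact .inl (hc.eq_of_claims (W.mem_edgeSet.mp (hex ▸ he)) (W.mem_edgeSet.mp (hfy ▸ hf))
        (hex ▸ hx) (hfy ▸ hy) (hex ▸ heS) (hfy ▸ hfS))
  · obtain rfl := inr_mem_piece.mp hzx
    obtain rfl := inr_mem_piece.mp hzy
    by_cases hxy : x = y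
    · exact .inl hxy
    have hexy := (Sym2.mem_and_mem_iff hxy).mp ⟨hx.1, hy.1⟩
    exact .inr ⟨W.mem_edgeSet.mp (hexy ▸ he), fun _ => hexy, fun _ => hexy⟩

theorem IsClaimChoice.exists_mem_piece_of_claimAdj (hc : IsClaimChoice W c)
    (hx : Claims W c x e) (hy : Claims W c y f) (h : ClaimAdj W x e y f) :
    ∃ z, z ∈ piece (claimedTwice W c) x e ∧ z ∈ piece (claimedTwice W c) y f := by
  rcases h with rfl | ⟨hxy, hxe, hyf⟩
  · exact ⟨inl x, inl_mem_piece_self hx.1, inl_mem_piece_self hy.1⟩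
  have hown : ∀ {z g}, Claims W c z g → (HasThreeNbrs W z → g = s(x, y)) →
      Claims W c z s(x, y) → g = s(x, y) := fun {z _} hzg hz hzc => by
    by_cases h : HasThreeNbrs W z
    exacts [hz h, hzg.eq hzc h]
  obtain ⟨z, hz⟩ := hc.exists_claims s(x, y) hxy
  by_cases hS : s(x, y) ∈ claimedTwice W c
  · exact ⟨inr ⟨_, hS⟩, inr_mem_piece.mpr (hown hx hxe (hS.2 x (Sym2.mem_mk_left x y))),
      inr_mem_piece.mpr (hown hy hyf (hS.2 y (Sym2.mem_mk_right x y)))⟩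
  rcases Sym2.mem_iff.mp hz.1 with rfl | rfl
  · obtain rfl := hown hx hxe hz
    exact ⟨inl y, (inl_mem_piece_of_not_mem hS).mpr (Sym2.mem_mk_right _ _),
      inl_mem_piece_self hy.1⟩
  · obtain rfl := hown hy hyf hz
    exact ⟨inl x, inl_mem_piece_self hx.1,
      (inl_mem_piece_of_not_mem hS).mpr (Sym2.mem_mk_left _ _)⟩

theorem IsClaimChoice.nonempty_repGraph_iso (hc : IsClaimChoice W c) :
    Nonempty (RepGraph W ≃g LineGraph (W.subdivideEdges (claimedTwice W c))) := by
  let φ : RepVert W → (W.subdivideEdges (claimedTwice W c)).edgeSet := fun x =>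
    ⟨piece _ (repBase x.1) (repEdge c x.1),
      piece_mem_edgeSet (hc.claims_repEdge x).1 (hc.claims_repEdge x).2.1⟩
  have hinj : Function.Injective φ := fun x y h =>
    have h := eq_of_piece_eq (hc.claims_repEdge x).1 (hc.claims_repEdge x).2
      (hc.claims_repEdge y).2 (congrArg Subtype.val h)
    repVert_ext h.1 h.2
  have hsurj : Function.Surjective φ := by
    rintro ⟨d, hd⟩
    obtain ⟨v, e, he, hv, rfl⟩ := exists_piece_eq hc hd
    obtain ⟨x, rfl, rfl⟩ := exists_repVert he hv
    exact ⟨x, rfl⟩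
  refine ⟨⟨Equiv.ofBijective φ ⟨hinj, hsurj⟩, fun {x y} => ?_⟩⟩
  obtain ⟨he, hx⟩ := hc.claims_repEdge x
  obtain ⟨hf, hy⟩ := hc.claims_repEdge y
  rw [repGraph_adj_iff c]
  exact and_congr hinj.ne_iff
    ⟨fun ⟨_, hzx, hzy⟩ => hc.claimAdj_of_mem_piece he hf hx hy hzx hzy,
      hc.exists_mem_piece_of_claimAdj hx hy⟩

end Iso

theorem stmt_18_general (V : Type) (W : SimpleGraph V) (n m : ℕ)
    (hW : IsWallGraph n m W) :
    (∃ (γ : Type) (W' : SimpleGraph γ), IsWallGraph n m W' ∧ Chordless W' ∧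
      Nonempty (RepGraph W ≃g LineGraph W')) ∧
    (∀ x, ∃ a b c, ∀ y, (RepGraph W).Adj x y → y = a ∨ y = b ∨ y = c) := by
  obtain ⟨f, P, hfP⟩ := hW
  obtain ⟨c, hc⟩ := exists_isClaimChoice hfP.exists_adj
  refine ⟨⟨_, W.subdivideEdges (claimedTwice W c),
    ⟨_, _, hfP.subdivideEdges claimedTwice_subset_edgeSet⟩,
    chordless_subdivideEdges_claimedTwice, hc.nonempty_repGraph_iso⟩, fun x => ?_⟩
  have hdeg := (encard_neighborSet_repGraph_le x).trans
    (hfP.encard_neighborSet_le (by norm_num) (encard_neighborSet_elemWall_le_three n m) _)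
  obtain ⟨a, b, c, habc⟩ := Set.exists_subset_triple_of_encard_le_three hdeg x
  exact ⟨a, b, c, fun y hy => habc hy⟩

theorem stmt_18 (V : Type) (W : SimpleGraph V) (n m : ℕ) (hn : 2 ≤ n) (hm : 2 ≤ m)
    (hW : IsWallGraph n m W) :
    (∃ (γ : Type) (W' : SimpleGraph γ), IsWallGraph n m W' ∧ Chordless W' ∧
      Nonempty (RepGraph W ≃g LineGraph W')) ∧
    (∀ x, ∃ a b c, ∀ y, (RepGraph W).Adj x y → y = a ∨ y = b ∨ y = c) :=
  stmt_18_general V W n m hW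
end
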